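/- arXiv:1704.03843 — 12 statements merged into one kernel-verified Lean document; each statement's English description precedes it below -/
import Mathlib

section
/- If X is a productively Lindelöf topological space, then X has the pL property: for every Lindelöf collection Y of open coverings of X, there is a sequence (A_n) of open subsets of X such that for each x ∈ X and each U ∈ Y there is n with x ∈ A_n ∈ U. -/
open Set TopologicalSpace

/-- `U` is an open covering of `X`. -/
def IsOpenCover {X : Type*} [TopologicalSpace X] (U : Set (Set X)) : Prop :=
  (∀ A ∈ U, IsOpen A) ∧ ⋃₀ U = Set.univ

/-- `𝒴` is a Lindelöf collection of open coverings: for every choice of a finite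
subfamily of each member, countably many of these finite families are cofinal. -/
def IsLindelofCollection {X : Type*} [TopologicalSpace X] (𝒴 : Set (Set (Set X))) : Prop :=
  ∀ f : Set (Set X) → Finset (Set X), (∀ U ∈ 𝒴, ↑(f U) ⊆ U) →
    ∃ g : ℕ → Set (Set X), (∀ n, g n ∈ 𝒴) ∧ ∀ U ∈ 𝒴, ∃ n, ↑(f (g n)) ⊆ U

/-- The pL property. -/
def HasPL (X : Type*) [TopologicalSpace X] : Prop :=
  ∀ 𝒴 : Set (Set (Set X)), (∀ U ∈ 𝒴, IsOpenCover U) → IsLindelofCollection 𝒴 →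
    ∃ A : ℕ → Set X, (∀ n, IsOpen (A n)) ∧
      ∀ x : X, ∀ U ∈ 𝒴, ∃ n, x ∈ A n ∧ A n ∈ U

/-- `X` is productively Lindelöf. -/
def ProductivelyLindelof (X : Type u) [TopologicalSpace X] : Prop :=
  ∀ (Y : Type u) (_ : TopologicalSpace Y), LindelofSpace Y → LindelofSpace (X × Y)

/-- `W` is a covering of `X × Y` by open boxes. -/
def IsBoxCover {X Y : Type*} [TopologicalSpace X] [TopologicalSpace Y]
    (W : Set (Set X × Set Y)) : Prop :=
  (∀ w ∈ W, IsOpen w.1 ∧ IsOpen w.2) ∧ ∀ p : X × Y, ∃ w ∈ W, p.1 ∈ w.1 ∧ p.2 ∈ w.2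

/-- `W` is ω-injective: each first factor occurs with only countably many second factors. -/
def IsOmegaInjective {X Y : Type*} (W : Set (Set X × Set Y)) : Prop :=
  ∀ A : Set X, {B : Set Y | (A, B) ∈ W}.Countable

/-- `W` is injective: equal first factors imply equal second factors. -/
def IsInjectiveCover {X Y : Type*} (W : Set (Set X × Set Y)) : Prop :=
  ∀ w ∈ W, ∀ w' ∈ W, w.1 = w'.1 → w.2 = w'.2

/-- The box family `W` refines the covering `W0` of `X × Y`. -/
def BoxRefines {X Y : Type*} (W : Set (Set X × Set Y)) (W0 : Set (Set (X × Y))) : Prop :=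
  ∀ w ∈ W, ∃ V ∈ W0, w.1 ×ˢ w.2 ⊆ V

theorem stmt1 {X : Type u} [TopologicalSpace X] (h : ProductivelyLindelof X) : HasPL X := by
  intro 𝒴 hcov hLin
  rcases isEmpty_or_nonempty X with hX | hX
  · exact ⟨fun _ => ∅, fun _ => isOpen_empty, fun x => (IsEmpty.false x).elim⟩
  rcases eq_empty_or_nonempty 𝒴 with rfl | h𝒴
  · exact ⟨fun _ => ∅, fun _ => isOpen_empty,
      fun x U hU => absurd hU (notMem_empty U)⟩
  set SB : Set (Set ↥𝒴) := {s | ∃ A : Set X, s = {U : ↥𝒴 | A ∈ (U : Set (Set X))}} with hSB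
  letI τ : TopologicalSpace ↥𝒴 := generateFrom SB
  have hbasis := isTopologicalBasis_of_subbasis (s := SB) rfl
  have hLY : LindelofSpace ↥𝒴 := by
    constructor
    apply isLindelof_of_countable_subcover
    intro ι U hUo hsU
    have hch : ∀ V : ↥𝒴, ∃ (i : ι) (F : Finset (Set X)),
        (↑F : Set (Set X)) ⊆ (V : Set (Set X)) ∧
        {W : ↥𝒴 | (↑F : Set (Set X)) ⊆ (W : Set (Set X))} ⊆ U i := by
      intro V
      obtain ⟨i, hi⟩ := mem_iUnion.1 (hsU (mem_univ V))
      obtain ⟨b, hb, hVb, hbU⟩ := hbasis.exists_subset_of_mem_open hi (hUo i)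
      obtain ⟨f, ⟨hf_fin, hf_sub⟩, rfl⟩ := hb
      haveI : Finite ↥f := hf_fin
      choose a ha using fun s : ↥f => hf_sub s.2
      have hrange : (Set.range a).Finite := Set.finite_range a
      refine ⟨i, hrange.toFinset, ?_, ?_⟩
      · intro A hA
        rw [Set.Finite.coe_toFinset] at hA
        obtain ⟨s, rfl⟩ := hA
        have hmem : V ∈ (s : Set ↥𝒴) := hVb s.1 s.2
        rw [ha s] at hmem
        exact hmem
      · intro W hW
        apply hbU
        intro s hs
        have : a ⟨s, hs⟩ ∈ (W : Set (Set X)) := by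
          apply hW
          rw [Set.Finite.coe_toFinset]
          exact ⟨⟨s, hs⟩, rfl⟩
        have heq : s = {U : ↥𝒴 | a ⟨s, hs⟩ ∈ (U : Set (Set X))} := ha ⟨s, hs⟩
        rw [heq]
        exact this
    choose i F hF₁ hF₂ using hch
    classical
    set f' : Set (Set X) → Finset (Set X) :=
      fun W => if hW : W ∈ 𝒴 then F ⟨W, hW⟩ else ∅ with hf'
    have hsub : ∀ W ∈ 𝒴, ↑(f' W) ⊆ W := by
      intro W hW
      rw [hf']
      simp only [dif_pos hW]
      exact hF₁ ⟨W, hW⟩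
    obtain ⟨g, hg𝒴, hgcof⟩ := hLin f' hsub
    refine ⟨Set.range (fun n => i ⟨g n, hg𝒴 n⟩), countable_range _, ?_⟩
    intro W _
    obtain ⟨n, hn⟩ := hgcof W.1 W.2
    have hfgn : f' (g n) = F ⟨g n, hg𝒴 n⟩ := dif_pos (hg𝒴 n)
    rw [hfgn] at hn
    exact mem_iUnion₂.2 ⟨i ⟨g n, hg𝒴 n⟩, mem_range_self n, hF₂ ⟨g n, hg𝒴 n⟩ hn⟩
  haveI hXY : LindelofSpace (X × ↥𝒴) := h ↥𝒴 τ hLY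
  set V' : {A : Set X // IsOpen A} → Set (X × ↥𝒴) :=
    fun A => A.1 ×ˢ {U : ↥𝒴 | A.1 ∈ (U : Set (Set X))} with hV'
  have hV'o : ∀ A, IsOpen (V' A) :=
    fun A => A.2.prod (isOpen_generateFrom_of_mem ⟨A.1, rfl⟩)
  have hV'cov : (univ : Set (X × ↥𝒴)) ⊆ ⋃ A, V' A := by
    rintro ⟨x, U⟩ -
    have hU := hcov U.1 U.2
    have hx : x ∈ ⋃₀ U.1 := hU.2.symm ▸ mem_univ x
    obtain ⟨A, hAU, hxA⟩ := hx
    exact mem_iUnion.2 ⟨⟨A, hU.1 A hAU⟩, hxA, hAU⟩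
  obtain ⟨r, hrc, hrcov⟩ := isLindelof_univ.elim_countable_subcover V' hV'o hV'cov
  have hrne : r.Nonempty := by
    haveI : Nonempty ↥𝒴 := h𝒴.to_subtype
    obtain ⟨x⟩ := hX
    obtain ⟨U⟩ := (inferInstance : Nonempty ↥𝒴)
    obtain ⟨A, hAr, -⟩ := mem_iUnion₂.1 (hrcov (mem_univ (x, U)))
    exact ⟨A, hAr⟩
  obtain ⟨e, he⟩ := hrc.exists_eq_range hrne
  refine ⟨fun n => (e n).1, fun n => (e n).2, ?_⟩
  intro x U hU
  obtain ⟨A, hAr, hmem⟩ := mem_iUnion₂.1 (hrcov (mem_univ (x, ⟨U, hU⟩)))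
  rw [he] at hAr
  obtain ⟨n, rfl⟩ := hAr
  exact ⟨n, hmem.1, hmem.2⟩
end

section
/- Let X and Y be Lindelöf spaces and let W be an ω-injective covering of X × Y by open boxes (for every open A ⊆ X, the set {B : A × B ∈ W} is at most countable). If X has the pL property, then W has a countable subcovering. -/
open Set TopologicalSpace

theorem stmt3 {X Y : Type*} [TopologicalSpace X] [TopologicalSpace Y]
    [LindelofSpace X] [LindelofSpace Y]
    (W : Set (Set X × Set Y)) (hW : IsBoxCover W) (hinj : IsOmegaInjective W)
    (hpl : HasPL X) :
    ∃ W' ⊆ W, W'.Countable ∧ ∀ p : X × Y, ∃ w ∈ W', p.1 ∈ w.1 ∧ p.2 ∈ w.2 := by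
  classical
  rcases isEmpty_or_nonempty Y with hY | hY
  · exact ⟨∅, empty_subset _, countable_empty, fun p => (IsEmpty.false p.2).elim⟩
  set Uof : Y → Set (Set X) := fun y => {A | ∃ B, (A, B) ∈ W ∧ y ∈ B} with hUof
  have hcov : ∀ U ∈ Set.range Uof, IsOpenCover U := by
    rintro _ ⟨y, rfl⟩
    constructor
    · rintro A ⟨B, hAB, _⟩
      exact (hW.1 _ hAB).1
    · ext x
      simp only [mem_sUnion, mem_univ, iff_true]
      obtain ⟨w, hw, hx, hy⟩ := hW.2 (x, y)
      exact ⟨w.1, ⟨w.2, hw, hy⟩, hx⟩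
  have hlin : IsLindelofCollection (Set.range Uof) := by
    intro f hf
    set Bof : Y → Set X → Set Y := fun y A =>
      if h : ∃ B, (A, B) ∈ W ∧ y ∈ B then h.choose else univ with hBof
    have hBofW : ∀ y, ∀ A ∈ Uof y, (A, Bof y A) ∈ W ∧ y ∈ Bof y A := by
      intro y A hA
      have h : ∃ B, (A, B) ∈ W ∧ y ∈ B := hA
      simp only [hBof]
      rw [dif_pos h]
      exact h.choose_spec
    set V : Y → Set Y := fun y => ⋂ A ∈ f (Uof y), Bof y A with hV
    have hVopen : ∀ y, IsOpen (V y) := by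
      intro y
      apply isOpen_biInter_finset
      intro A hA
      by_cases h : ∃ B, (A, B) ∈ W ∧ y ∈ B
      · simp only [hBof, dif_pos h]
        exact (hW.1 _ h.choose_spec.1).2
      · simp only [hBof, dif_neg h]
        exact isOpen_univ
    have hVmem : ∀ y, y ∈ V y := by
      intro y
      simp only [hV, mem_iInter]
      intro A hA
      exact (hBofW y A (hf _ ⟨y, rfl⟩ hA)).2
    obtain ⟨r, hrc, hrcov⟩ := isLindelof_univ.elim_countable_subcover V hVopen
      (fun y _ => mem_iUnion.2 ⟨y, hVmem y⟩)
    have hrne : r.Nonempty := by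
      obtain ⟨y⟩ := hY
      obtain ⟨z, hzr, _⟩ := mem_iUnion₂.1 (hrcov (mem_univ y))
      exact ⟨z, hzr⟩
    obtain ⟨e, he⟩ := hrc.exists_eq_range hrne
    refine ⟨fun n => Uof (e n), fun n => ⟨e n, rfl⟩, ?_⟩
    rintro _ ⟨y, rfl⟩
    obtain ⟨z, hzr, hyV⟩ := mem_iUnion₂.1 (hrcov (mem_univ y))
    obtain ⟨n, rfl⟩ : z ∈ range e := he ▸ hzr
    refine ⟨n, fun A hA => ?_⟩
    have hAU : A ∈ Uof (e n) := hf _ ⟨e n, rfl⟩ hA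
    have := (hBofW (e n) A hAU).1
    have hy : y ∈ Bof (e n) A := by
      simp only [hV, mem_iInter] at hyV
      exact hyV A hA
    exact ⟨Bof (e n) A, this, hy⟩
  obtain ⟨A, hAopen, hA⟩ := hpl (Set.range Uof) hcov hlin
  refine ⟨⋃ n, {w ∈ W | w.1 = A n}, ?_, ?_, ?_⟩
  · rintro w hw
    obtain ⟨n, hwn, _⟩ := mem_iUnion.1 hw
    exact hwn
  · apply countable_iUnion
    intro n
    have : {w ∈ W | w.1 = A n} = (fun B => (A n, B)) '' {B | (A n, B) ∈ W} := by
      ext w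
      constructor
      · rintro ⟨hw, h1⟩
        exact ⟨w.2, by rw [← h1]; exact hw, by rw [← h1]⟩
      · rintro ⟨B, hB, rfl⟩
        exact ⟨hB, rfl⟩
    rw [this]
    exact (hinj (A n)).image _
  · rintro ⟨x, y⟩
    obtain ⟨n, hxn, B, hB, hyB⟩ := hA x (Uof y) ⟨y, rfl⟩
    exact ⟨(A n, B), mem_iUnion.2 ⟨n, hB, rfl⟩, hxn, hyB⟩
end

section
/- A Lindelöf space X is productively Lindelöf if, and only if, X has the pL property and for every Lindelöf space Y and every open covering W of X × Y there is an ω-injective refinement of W by open boxes covering X × Y. -/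
open Set TopologicalSpace

lemma pl_basis_lemma {X : Type u} {𝒴 : Set (Set (Set X))}
    {u : Set ↥𝒴}
    (hu : GenerateOpen {S : Set ↥𝒴 | ∃ F : Finset (Set X), S = {V : ↥𝒴 | ↑F ⊆ V.1}} u) :
    ∀ V ∈ u, ∃ F : Finset (Set X), ↑F ⊆ V.1 ∧ {W : ↥𝒴 | ↑F ⊆ W.1} ⊆ u := by
  classical
  induction hu with
  | basic s hs =>
    obtain ⟨F, rfl⟩ := hs
    exact fun V hV => ⟨F, hV, Subset.rfl⟩
  | univ =>
    exact fun V _ => ⟨∅, by simp, fun _ _ => mem_univ _⟩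
  | inter s t _ _ ihs iht =>
    rintro V ⟨hVs, hVt⟩
    obtain ⟨F₁, hF₁, hF₁s⟩ := ihs V hVs
    obtain ⟨F₂, hF₂, hF₂t⟩ := iht V hVt
    refine ⟨F₁ ∪ F₂, ?_, ?_⟩
    · rw [Finset.coe_union]; exact union_subset hF₁ hF₂
    · intro W hW
      rw [mem_setOf_eq, Finset.coe_union, union_subset_iff] at hW
      exact ⟨hF₁s hW.1, hF₂t hW.2⟩
  | sUnion S _ ih =>
    rintro V ⟨s, hsS, hVs⟩
    obtain ⟨F, hF, hFs⟩ := ih s hsS V hVs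
    exact ⟨F, hF, fun W hW => ⟨s, hsS, hFs hW⟩⟩

lemma prodLindelof_hasPL {X : Type u} [TopologicalSpace X] (hPL : ProductivelyLindelof X) :
    HasPL X := by
  classical
  intro 𝒴 hcov hLin
  set 𝔅 : Set (Set ↥𝒴) := {S : Set ↥𝒴 | ∃ F : Finset (Set X), S = {V : ↥𝒴 | ↑F ⊆ V.1}}
    with h𝔅
  letI tY : TopologicalSpace ↥𝒴 := generateFrom 𝔅
  -- ↥𝒴 is Lindelöf
  haveI hYlin : LindelofSpace ↥𝒴 := by
    refine ⟨isLindelof_of_countable_subcover ?_⟩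
    intro ι U hUo hUc
    by_cases hne : Nonempty ↥𝒴
    · -- choose for each V an index and a basic nbhd
      have hchoice : ∀ V : ↥𝒴, ∃ p : Finset (Set X) × ι,
          ↑p.1 ⊆ V.1 ∧ {W : ↥𝒴 | ↑p.1 ⊆ W.1} ⊆ U p.2 := by
        intro V
        obtain ⟨i, hi⟩ := mem_iUnion.mp (hUc (mem_univ V))
        obtain ⟨F, hF, hFs⟩ := pl_basis_lemma (hUo i) V hi
        exact ⟨(F, i), hF, hFs⟩
      choose p hp1 hp2 using hchoice
      obtain ⟨g, hg1, hg2⟩ := hLin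
        (fun u => if h : u ∈ 𝒴 then (p ⟨u, h⟩).1 else ∅) (by
        intro u hu
        simp only [dif_pos hu]
        exact hp1 ⟨u, hu⟩)
      refine ⟨range (fun n => (p ⟨g n, hg1 n⟩).2), countable_range _, ?_⟩
      intro V _
      obtain ⟨n, hn⟩ := hg2 V.1 V.2
      have hn' : ↑(p ⟨g n, hg1 n⟩).1 ⊆ V.1 := by
        simpa only [dif_pos (hg1 n)] using hn
      refine mem_iUnion₂.mpr ⟨(p ⟨g n, hg1 n⟩).2, mem_range_self n, ?_⟩
      exact hp2 ⟨g n, hg1 n⟩ hn'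
    · exact ⟨∅, countable_empty, fun V _ => absurd ⟨V⟩ hne⟩
  haveI hXY : LindelofSpace (X × ↥𝒴) := hPL ↥𝒴 tY hYlin
  -- cover X × ↥𝒴 by boxes
  set σ := {A : Set X // IsOpen A} with hσ
  have hbox : ∀ i : σ, IsOpen ((i.1 ×ˢ {V : ↥𝒴 | i.1 ∈ V.1}) : Set (X × ↥𝒴)) := by
    intro i
    refine i.2.prod ?_
    have he : {V : ↥𝒴 | i.1 ∈ V.1} = {V : ↥𝒴 | ↑({i.1} : Finset (Set X)) ⊆ V.1} := by
      ext V; simp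
    rw [he]
    exact isOpen_generateFrom_of_mem ⟨{i.1}, rfl⟩
  have hcover : (univ : Set (X × ↥𝒴)) ⊆ ⋃ i : σ, i.1 ×ˢ {V : ↥𝒴 | i.1 ∈ V.1} := by
    rintro ⟨x, V⟩ -
    have hx : x ∈ ⋃₀ V.1 := by rw [(hcov V.1 V.2).2]; exact mem_univ x
    obtain ⟨A, hAV, hxA⟩ := hx
    exact mem_iUnion.mpr ⟨⟨A, (hcov V.1 V.2).1 A hAV⟩, hxA, hAV⟩
  obtain ⟨r, hrc, hrcov⟩ := isLindelof_univ.elim_countable_subcover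
    (fun i : σ => i.1 ×ˢ {V : ↥𝒴 | i.1 ∈ V.1}) hbox hcover
  rcases r.eq_empty_or_nonempty with rfl | hrne
  · refine ⟨fun _ => ∅, fun _ => isOpen_empty, ?_⟩
    intro x u hu
    have := hrcov (mem_univ (x, (⟨u, hu⟩ : ↥𝒴)))
    simp at this
  · obtain ⟨e, he⟩ := hrc.exists_eq_range hrne
    refine ⟨fun n => (e n).1, fun n => (e n).2, ?_⟩
    intro x u hu
    obtain ⟨i, hir, hxi, hVi⟩ :
        ∃ i : σ, i ∈ r ∧ x ∈ i.1 ∧ i.1 ∈ u := by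
      have := hrcov (mem_univ (x, (⟨u, hu⟩ : ↥𝒴)))
      obtain ⟨i, hir, hmem⟩ := mem_iUnion₂.mp this
      exact ⟨i, hir, hmem.1, hmem.2⟩
    rw [he] at hir
    obtain ⟨n, rfl⟩ := hir
    exact ⟨n, hxi, hVi⟩

lemma prodLindelof_refines {X : Type u} [TopologicalSpace X] (hPL : ProductivelyLindelof X)
    (Y : Type u) (tY : TopologicalSpace Y) (hY : LindelofSpace Y)
    (W0 : Set (Set (X × Y))) (hop : ∀ V ∈ W0, IsOpen V) (hcov : ⋃₀ W0 = Set.univ) :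
    ∃ W' : Set (Set X × Set Y), IsBoxCover W' ∧ BoxRefines W' W0 ∧ IsOmegaInjective W' := by
  haveI hXY : LindelofSpace (X × Y) := hPL Y tY hY
  set σ := {w : Set X × Set Y //
    IsOpen w.1 ∧ IsOpen w.2 ∧ ∃ V ∈ W0, w.1 ×ˢ w.2 ⊆ V} with hσ
  have hbox : ∀ i : σ, IsOpen (i.1.1 ×ˢ i.1.2) := fun i => i.2.1.prod i.2.2.1
  have hcover : (univ : Set (X × Y)) ⊆ ⋃ i : σ, i.1.1 ×ˢ i.1.2 := by
    rintro ⟨x, y⟩ -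
    have hx : (x, y) ∈ ⋃₀ W0 := by rw [hcov]; exact mem_univ _
    obtain ⟨V, hV, hxy⟩ := hx
    obtain ⟨A, B, hA, hB, hxA, hyB, hsub⟩ := (isOpen_prod_iff.mp (hop V hV)) x y hxy
    exact mem_iUnion.mpr ⟨⟨(A, B), hA, hB, V, hV, hsub⟩, hxA, hyB⟩
  obtain ⟨r, hrc, hrcov⟩ := isLindelof_univ.elim_countable_subcover
    (fun i : σ => i.1.1 ×ˢ i.1.2) hbox hcover
  refine ⟨Subtype.val '' r, ⟨?_, ?_⟩, ?_, ?_⟩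
  · rintro w ⟨i, _, rfl⟩
    exact ⟨i.2.1, i.2.2.1⟩
  · intro p
    obtain ⟨i, hir, hp⟩ := mem_iUnion₂.mp (hrcov (mem_univ p))
    exact ⟨i.1, mem_image_of_mem _ hir, hp.1, hp.2⟩
  · rintro w ⟨i, _, rfl⟩
    exact i.2.2.2
  · intro A
    refine ((hrc.image Subtype.val).image Prod.snd).mono ?_
    rintro B hB
    exact ⟨(A, B), hB, rfl⟩

lemma pl_backward {X : Type u} [TopologicalSpace X] (hpl : HasPL X)
    (Y : Type u) (tY : TopologicalSpace Y) (hY : LindelofSpace Y)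
    (href : ∀ W0 : Set (Set (X × Y)), (∀ V ∈ W0, IsOpen V) → ⋃₀ W0 = Set.univ →
      ∃ W' : Set (Set X × Set Y), IsBoxCover W' ∧ BoxRefines W' W0 ∧ IsOmegaInjective W') :
    LindelofSpace (X × Y) := by
  classical
  rcases isEmpty_or_nonempty Y with hYe | hYne
  · infer_instance
  refine ⟨isLindelof_of_countable_subcover ?_⟩
  intro ι U hUo hUc
  -- get box refinement of range U
  obtain ⟨W', hBC, hRef, hInj⟩ := href (range U) (by rintro V ⟨i, rfl⟩; exact hUo i)
    (by rw [sUnion_range]; exact univ_subset_iff.mp hUc)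
  -- the covers U_y
  set 𝒰 : Y → Set (Set X) := fun y => {A | ∃ B, (A, B) ∈ W' ∧ y ∈ B} with h𝒰
  have h𝒰cov : ∀ y : Y, IsOpenCover (𝒰 y) := by
    intro y
    constructor
    · rintro A ⟨B, hAB, _⟩
      exact (hBC.1 (A, B) hAB).1
    · apply eq_univ_of_forall
      intro x
      obtain ⟨w, hw, hx1, hx2⟩ := hBC.2 (x, y)
      exact ⟨w.1, ⟨w.2, hw, hx2⟩, hx1⟩
  -- selection of second factors
  set Bsel : Y → Set X → Set Y := fun y A =>
    if h : ∃ B, (A, B) ∈ W' ∧ y ∈ B then h.choose else univ with hBsel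
  have hBselMem : ∀ y A, y ∈ Bsel y A := by
    intro y A
    by_cases h : ∃ B, (A, B) ∈ W' ∧ y ∈ B
    · simp only [hBsel, dif_pos h]; exact h.choose_spec.2
    · simp only [hBsel, dif_neg h]; trivial
  have hBselW : ∀ y A, (∃ B, (A, B) ∈ W' ∧ y ∈ B) → (A, Bsel y A) ∈ W' := by
    intro y A h
    simp only [hBsel, dif_pos h]
    exact h.choose_spec.1
  have hBselOpen : ∀ y A, IsOpen (Bsel y A) := by
    intro y A
    by_cases h : ∃ B, (A, B) ∈ W' ∧ y ∈ B
    · simp only [hBsel, dif_pos h]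
      exact (hBC.1 (A, h.choose) h.choose_spec.1).2
    · simp only [hBsel, dif_neg h]; exact isOpen_univ
  -- 𝒴 is a Lindelöf collection
  have hLC : IsLindelofCollection (range 𝒰) := by
    intro f hf
    set Bint : Y → Set Y := fun y => ⋂ A ∈ f (𝒰 y), Bsel y A with hBint
    have hBintOpen : ∀ y, IsOpen (Bint y) :=
      fun y => isOpen_biInter_finset (fun A _ => hBselOpen y A)
    have hBintMem : ∀ y, y ∈ Bint y :=
      fun y => mem_iInter₂.mpr (fun A _ => hBselMem y A)
    obtain ⟨r, hrc, hrcov⟩ := isLindelof_univ.elim_countable_subcover Bint hBintOpen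
      (fun y _ => mem_iUnion.mpr ⟨y, hBintMem y⟩)
    have hrne : r.Nonempty := by
      rcases r.eq_empty_or_nonempty with rfl | h
      · obtain ⟨y⟩ := hYne
        have := hrcov (mem_univ y)
        simp at this
      · exact h
    obtain ⟨e, he⟩ := hrc.exists_eq_range hrne
    refine ⟨fun n => 𝒰 (e n), fun n => ⟨e n, rfl⟩, ?_⟩
    rintro u ⟨y, rfl⟩
    obtain ⟨y', hy'r, hyB⟩ := mem_iUnion₂.mp (hrcov (mem_univ y))
    rw [he] at hy'r
    obtain ⟨n, rfl⟩ := hy'r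
    refine ⟨n, ?_⟩
    intro a ha
    have haU : a ∈ 𝒰 (e n) := hf (𝒰 (e n)) ⟨e n, rfl⟩ ha
    have hyBsel : y ∈ Bsel (e n) a := mem_iInter₂.mp hyB a ha
    exact ⟨Bsel (e n) a, hBselW (e n) a haU, hyBsel⟩
  -- apply pL
  obtain ⟨A, hAopen, hA⟩ := hpl (range 𝒰) (by rintro u ⟨y, rfl⟩; exact h𝒰cov y) hLC
  -- build countable subcover
  set S : Set (ℕ × Set Y) := {p | (A p.1, p.2) ∈ W'} with hS
  have hSc : S.Countable := by
    have : S = ⋃ n : ℕ, (fun B => (n, B)) '' {B | (A n, B) ∈ W'} := by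
      ext ⟨n, B⟩
      simp [hS]
    rw [this]
    exact countable_iUnion (fun n => (hInj (A n)).image _)
  haveI := hSc.to_subtype
  have hch : ∀ p : ↥S, ∃ i : ι, (A p.1.1) ×ˢ p.1.2 ⊆ U i := by
    intro p
    obtain ⟨V, hV, hsub⟩ := hRef (A p.1.1, p.1.2) p.2
    obtain ⟨i, rfl⟩ := hV
    exact ⟨i, hsub⟩
  choose F hF using hch
  refine ⟨range F, countable_range F, ?_⟩
  rintro ⟨x, y⟩ -
  obtain ⟨n, hxA, hAn⟩ := hA x (𝒰 y) ⟨y, rfl⟩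
  obtain ⟨B, hAB, hyB⟩ := hAn
  have hp : ((n, B) : ℕ × Set Y) ∈ S := hAB
  refine mem_iUnion₂.mpr ⟨F ⟨(n, B), hp⟩, mem_range_self _, ?_⟩
  exact hF ⟨(n, B), hp⟩ ⟨hxA, hyB⟩

theorem stmt4 {X : Type u} [TopologicalSpace X] [LindelofSpace X] :
    ProductivelyLindelof X ↔
      (HasPL X ∧
        ∀ (Y : Type u) (_ : TopologicalSpace Y), LindelofSpace Y →
          ∀ W0 : Set (Set (X × Y)), (∀ V ∈ W0, IsOpen V) → ⋃₀ W0 = Set.univ →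
            ∃ W' : Set (Set X × Set Y),
              IsBoxCover W' ∧ BoxRefines W' W0 ∧ IsOmegaInjective W') := by
  constructor
  · intro h
    exact ⟨prodLindelof_hasPL h, fun Y tY hY => prodLindelof_refines h Y tY hY⟩
  · rintro ⟨hpl, href⟩ Y tY hY
    exact pl_backward hpl Y tY hY (href Y tY hY)
end

section
/- Let X be a T1 space without isolated points admitting a base B such that no two distinct members A, B ∈ B have finite symmetric difference. Then for every Lindelöf space Y and every open covering W of X × Y there is an injective refinement of W: a covering of X × Y by open boxes refining W such that equal first factors imply equal second factors. -/
open Set TopologicalSpace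

/-- A nonempty open set in a T1 space with no isolated points is infinite. -/
lemma open_infinite_aux {X : Type*} [TopologicalSpace X] [T1Space X]
    (hiso : ∀ x : X, ¬ IsOpen ({x} : Set X)) {U : Set X} (hU : IsOpen U) {x : X}
    (hx : x ∈ U) : U.Infinite := by
  intro hfin
  apply hiso x
  have h1 : IsClosed (U \ {x}) := (hfin.subset diff_subset).isClosed
  have h2 : ({x} : Set X) = U ∩ (U \ {x})ᶜ := by
    ext z
    simp only [mem_singleton_iff, mem_inter_iff, mem_compl_iff, mem_diff, not_and, not_not]
    constructor
    · rintro rfl; exact ⟨hx, fun _ => rfl⟩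
    · rintro ⟨hz, h⟩; exact h hz
  rw [h2]
  exact hU.inter h1.isOpen_compl

lemma embed_prod_nat_aux {α : Type u} [Infinite α] : Nonempty ((α × ℕ) ↪ α) := by
  rw [← Cardinal.le_def]
  have h1 : Cardinal.mk (α × ℕ) = Cardinal.mk α * Cardinal.aleph0 := by
    simp [Cardinal.mk_prod]
  rw [h1, Cardinal.mk_mul_aleph0_eq]

theorem stmt5 {X Y : Type*} [TopologicalSpace X] [TopologicalSpace Y] [T1Space X]
    [LindelofSpace Y]
    (hiso : ∀ x : X, ¬ IsOpen ({x} : Set X))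
    (B : Set (Set X)) (hB : TopologicalSpace.IsTopologicalBasis B)
    (hdiff : ∀ A ∈ B, ∀ A' ∈ B, A ≠ A' → (symmDiff A A').Infinite)
    (W0 : Set (Set (X × Y))) (hW0o : ∀ V ∈ W0, IsOpen V) (hW0c : ⋃₀ W0 = Set.univ) :
    ∃ W' : Set (Set X × Set Y),
      IsBoxCover W' ∧ BoxRefines W' W0 ∧ IsInjectiveCover W' := by
  classical
  by_cases hne : Nonempty (X × Y)
  swap
  · exact ⟨∅, ⟨fun w hw => absurd hw (notMem_empty w), fun p => absurd ⟨p⟩ hne⟩,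
      fun w hw => absurd hw (notMem_empty w), fun w hw => absurd hw (notMem_empty w)⟩
  have hX : Nonempty X := hne.elim fun p => ⟨p.1⟩
  have hY : Nonempty Y := hne.elim fun p => ⟨p.2⟩
  -- Step 1: basic boxes around each point
  have h1 : ∀ p : X × Y, ∃ w : Set X × Set Y, w.1 ∈ B ∧ IsOpen w.2 ∧ p.1 ∈ w.1 ∧ p.2 ∈ w.2 ∧
      ∃ V ∈ W0, w.1 ×ˢ w.2 ⊆ V := by
    intro p
    have hp : p ∈ ⋃₀ W0 := hW0c ▸ mem_univ p
    obtain ⟨V, hV, hpV⟩ := hp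
    obtain ⟨u, v, hu, hv, hp1, hp2, huv⟩ := (isOpen_prod_iff.mp (hW0o V hV)) p.1 p.2 hpV
    obtain ⟨A, hA, hp1A, hAu⟩ := hB.exists_subset_of_mem_open hp1 hu
    exact ⟨(A, v), hA, hv, hp1A, hp2, V, hV, (prod_mono hAu subset_rfl).trans huv⟩
  choose box hbox1 hbox2 hbox3 hbox4 hbox5 using h1
  -- Step 2: for each x, countably many boxes cover {x} × Y
  have h2 : ∀ x : X, ∃ (Ax : ℕ → Set X) (Bx : ℕ → Set Y),
      (∀ n, Ax n ∈ B ∧ IsOpen (Bx n) ∧ x ∈ Ax n ∧ ∃ V ∈ W0, Ax n ×ˢ Bx n ⊆ V) ∧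
      ∀ y : Y, ∃ n, y ∈ Bx n := by
    intro x
    obtain ⟨f, hf⟩ := (isLindelof_univ (X := Y)).indexed_countable_subcover
      (fun y => (box (x, y)).2) (fun y => hbox2 (x, y))
      (fun y _ => mem_iUnion.mpr ⟨y, hbox4 (x, y)⟩)
    exact ⟨fun n => (box (x, f n)).1, fun n => (box (x, f n)).2,
      fun n => ⟨hbox1 _, hbox2 _, hbox3 _, hbox5 _⟩,
      fun y => mem_iUnion.mp (hf (mem_univ y))⟩
  choose Af Bf hprop hcov using h2
  have hAB : ∀ x n, Af x n ∈ B := fun x n => (hprop x n).1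
  have hBo : ∀ x n, IsOpen (Bf x n) := fun x n => (hprop x n).2.1
  have hxA : ∀ x n, x ∈ Af x n := fun x n => (hprop x n).2.2.1
  have hsubV : ∀ x n, ∃ V ∈ W0, Af x n ×ˢ Bf x n ⊆ V := fun x n => (hprop x n).2.2.2
  -- Step 3: for each basic set A0, choose an injective encoding of the second factors into A0
  have h5 : ∀ A0 : Set X, ∃ e : Set Y × ℕ → X,
      (∃ x n, Af x n = A0) →
        ((∀ b k, (∃ x n, Af x n = A0 ∧ Bf x n = b) → e (b, k) ∈ A0) ∧
         (∀ b k b' k', (∃ x n, Af x n = A0 ∧ Bf x n = b) →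
            (∃ x n, Af x n = A0 ∧ Bf x n = b') →
            e (b, k) = e (b', k') → b = b' ∧ k = k')) := by
    intro A0
    by_cases hA0 : ∃ x n, Af x n = A0
    case neg => exact ⟨fun _ => hX.some, fun h => absurd h hA0⟩
    obtain ⟨x1, n1, hx1⟩ := hA0
    have hopen : IsOpen A0 := hx1 ▸ hB.isOpen (hAB x1 n1)
    have hxin : x1 ∈ A0 := hx1 ▸ hxA x1 n1
    haveI hinf : Infinite ↥A0 := (open_infinite_aux hiso hopen hxin).to_subtype
    set TT : Set (Set Y) := {b | ∃ x n, Af x n = A0 ∧ Bf x n = b} with hTT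
    have hw : ∀ b : ↥TT, ∃ q : X × ℕ, Af q.1 q.2 = A0 ∧ Bf q.1 q.2 = ↑b := by
      rintro ⟨b, x, n, h1, h2⟩; exact ⟨(x, n), h1, h2⟩
    choose wit hwit1 hwit2 using hw
    obtain ⟨g2⟩ := embed_prod_nat_aux (α := ↥A0)
    have hwmem : ∀ b : ↥TT, (wit b).1 ∈ A0 := fun b => (hwit1 b) ▸ hxA (wit b).1 (wit b).2
    set f : ↥TT × ℕ → ↥A0 := fun p =>
      g2 (⟨(wit p.1).1, hwmem p.1⟩, Nat.pairEquiv ((wit p.1).2, p.2)) with hfdef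
    have hfinj : Function.Injective f := by
      rintro ⟨b, k⟩ ⟨b', k'⟩ hfe
      have heq := g2.injective hfe
      have h1 := congrArg Prod.fst heq
      have h2 := Nat.pairEquiv.injective (congrArg Prod.snd heq)
      have e1 : (wit b).1 = (wit b').1 := congrArg Subtype.val h1
      have e2 : (wit b).2 = (wit b').2 := congrArg Prod.fst h2
      have e3 : k = k' := congrArg Prod.snd h2
      have hb : (b : Set Y) = (b' : Set Y) := by rw [← hwit2 b, ← hwit2 b', e1, e2]
      exact Prod.ext (Subtype.ext hb) e3
    refine ⟨fun p => if h : p.1 ∈ TT then ↑(f (⟨p.1, h⟩, p.2)) else hX.some,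
      fun _ => ⟨?_, ?_⟩⟩
    · intro b k hb
      have hb2 : b ∈ TT := hb
      simp only [dif_pos hb2]
      exact (f (⟨b, hb2⟩, k)).2
    · intro b k b' k' hb hb' he'
      have hb2 : b ∈ TT := hb
      have hb2' : b' ∈ TT := hb'
      simp only [dif_pos hb2, dif_pos hb2'] at he'
      have := hfinj (Subtype.ext he')
      have hbb : (⟨b, hb2⟩ : ↥TT) = ⟨b', hb2'⟩ := congrArg Prod.fst this
      exact ⟨congrArg Subtype.val hbb, congrArg Prod.snd this⟩
  choose e he using h5
  -- Step 4: pick the removed point, avoiding x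
  have h7 : ∀ x n, ∃ kk : ℕ, e (Af x n) (Bf x n, kk) ≠ x := by
    intro x n
    have hr : ∃ x' n', Af x' n' = Af x n := ⟨x, n, rfl⟩
    have hbT : ∃ x' n', Af x' n' = Af x n ∧ Bf x' n' = Bf x n := ⟨x, n, rfl, rfl⟩
    by_contra hcon
    push_neg at hcon
    have h01 := ((he (Af x n) hr).2 _ 0 _ 1 hbT hbT ((hcon 0).trans (hcon 1).symm)).2
    exact absurd h01 (by norm_num)
  choose kk hkk using h7
  refine ⟨{w | ∃ x n, w = (Af x n \ {e (Af x n) (Bf x n, kk x n)}, Bf x n)},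
    ⟨?_, ?_⟩, ?_, ?_⟩
  · rintro w ⟨x, n, rfl⟩
    exact ⟨(hB.isOpen (hAB x n)).sdiff isClosed_singleton, hBo x n⟩
  · rintro ⟨x, y⟩
    obtain ⟨n, hn⟩ := hcov x y
    refine ⟨(Af x n \ {e (Af x n) (Bf x n, kk x n)}, Bf x n), ⟨x, n, rfl⟩,
      ⟨hxA x n, fun h => hkk x n ?_⟩, hn⟩
    rw [mem_singleton_iff] at h
    exact h.symm
  · rintro w ⟨x, n, rfl⟩
    obtain ⟨V, hV, hsub⟩ := hsubV x n
    exact ⟨V, hV, (prod_mono diff_subset subset_rfl).trans hsub⟩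
  · rintro w ⟨x, n, rfl⟩ w' ⟨x', n', rfl⟩ h1
    dsimp only at h1 ⊢
    set a := e (Af x n) (Bf x n, kk x n) with ha
    set a' := e (Af x' n') (Bf x' n', kk x' n') with ha'
    have haA : a ∈ Af x n := (he (Af x n) ⟨x, n, rfl⟩).1 _ _ ⟨x, n, rfl, rfl⟩
    have ha'A : a' ∈ Af x' n' := (he (Af x' n') ⟨x', n', rfl⟩).1 _ _ ⟨x', n', rfl, rfl⟩
    have hAeq : Af x n = Af x' n' := by
      by_contra hne'
      have hinf := hdiff _ (hAB x n) _ (hAB x' n') hne'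
      have hsub : symmDiff (Af x n) (Af x' n') ⊆ {a, a'} := by
        intro z hz
        rw [Set.mem_symmDiff] at hz
        rcases hz with ⟨hz1, hz2⟩ | ⟨hz1, hz2⟩
        · left
          by_contra hza
          have hzm : z ∈ Af x n \ {a} := ⟨hz1, hza⟩
          rw [h1] at hzm
          exact hz2 hzm.1
        · right
          by_contra hza
          have hzm : z ∈ Af x' n' \ {a'} := ⟨hz1, hza⟩
          rw [← h1] at hzm
          exact hz2 hzm.1
      exact hinf (((Set.finite_singleton a').insert a).subset hsub)
    have hae : a = a' := by
      have hnm : a ∉ Af x n \ {a} := fun h => h.2 rfl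
      rw [h1] at hnm
      have haA' : a ∈ Af x' n' := hAeq ▸ haA
      by_contra hcon
      exact hnm ⟨haA', hcon⟩
    have hEq : e (Af x n) (Bf x n, kk x n) = e (Af x n) (Bf x' n', kk x' n') := by
      rw [ha] at hae
      rw [ha', ← hAeq] at hae
      exact hae
    exact ((he (Af x n) ⟨x, n, rfl⟩).2 _ _ _ _ ⟨x, n, rfl, rfl⟩
      ⟨x', n', hAeq.symm, rfl⟩ hEq).1
end

section
/- Let X be a scattered T1 space and Y a Lindelöf space. Then every open covering W of X × Y has an ω-injective open refinement by open boxes. -/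
open Set TopologicalSpace

/-- From scatteredness, an open selection `U : X → Set X` with `x ∈ U x` that is
"asymmetric": `x ∈ U y` and `y ∈ U x` force `x = y`. -/
lemma exists_asym_selection {X : Type*} [TopologicalSpace X]
    (hsc : ∀ S : Set X, S.Nonempty → ∃ x ∈ S, ∃ U : Set X, IsOpen U ∧ U ∩ S = {x}) :
    ∃ U : X → Set X, (∀ x, IsOpen (U x)) ∧ (∀ x, x ∈ U x) ∧
      ∀ x y, x ∈ U y → y ∈ U x → x = y := by
  classical
  set P : Set (X × Set X) → Prop := fun u =>
    (∀ p ∈ u, IsOpen p.2 ∧ p.1 ∈ p.2 ∧ ∀ z ∈ p.2, (∀ V, (z, V) ∉ u) → z = p.1) ∧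
    ∀ p ∈ u, ∀ q ∈ u, p.1 ∈ q.2 → q.1 ∈ p.2 → p.1 = q.1 with hP
  obtain ⟨m, hm⟩ : ∃ m, Maximal (fun u => u ∈ {u | P u}) m := by
    apply zorn_subset
    intro c hc hchain
    refine ⟨⋃₀ c, ⟨?_, ?_⟩, fun u hu => subset_sUnion_of_mem hu⟩
    · rintro p ⟨u, hu, hpu⟩
      obtain ⟨h1, _⟩ := hc hu
      obtain ⟨ho, hm, hz⟩ := h1 p hpu
      exact ⟨ho, hm, fun z hzp hzn => hz z hzp fun V hV => hzn V ⟨u, hu, hV⟩⟩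
    · rintro p ⟨u, hu, hpu⟩ q ⟨v, hv, hqv⟩ hpq hqp
      rcases hchain.total hu hv with h | h
      · exact (hc hv).2 p (h hpu) q hqv hpq hqp
      · exact (hc hu).2 p hpu q (h hqv) hpq hqp
  have hmP : P m := hm.prop
  have hmax : ∀ a, P a → m ⊆ a → a = m := fun a ha hma =>
    subset_antisymm (hm.le_of_ge ha hma) hma
  clear hm
  -- the maximal element has full domain
  have hdom : ∀ x : X, ∃ V, (x, V) ∈ m := by
    intro x
    by_contra hx
    push_neg at hx
    set S : Set X := {z | ∀ V, (z, V) ∉ m} with hS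
    have hSne : S.Nonempty := ⟨x, fun V => hx V⟩
    obtain ⟨x₀, hx₀S, V₀, hV₀o, hV₀⟩ := hsc S hSne
    have hx₀V₀ : x₀ ∈ V₀ := by
      have : x₀ ∈ V₀ ∩ S := by rw [hV₀]; rfl
      exact this.1
    have hnew : (x₀, V₀) ∉ m := hx₀S V₀
    have hP' : P (insert (x₀, V₀) m) := by
      constructor
      · rintro p (rfl | hp)
        · refine ⟨hV₀o, hx₀V₀, fun z hz hzn => ?_⟩
          have hzS : z ∈ S := fun V => fun hmem => hzn V (Or.inr hmem)
          have : z ∈ V₀ ∩ S := ⟨hz, hzS⟩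
          rw [hV₀] at this
          exact this
        · obtain ⟨ho, hmem, hz⟩ := hmP.1 p hp
          exact ⟨ho, hmem, fun z hzp hzn => hz z hzp fun V hV => hzn V (Or.inr hV)⟩
      · rintro p (rfl | hp) q (rfl | hq) hpq hqp
        · rfl
        · exact (hmP.1 q hq).2.2 x₀ hpq fun V => hx₀S V
        · exact ((hmP.1 p hp).2.2 x₀ hqp fun V => hx₀S V).symm
        · exact hmP.2 p hp q hq hpq hqp
    have := hmax _ hP' (subset_insert _ _)
    exact hnew (this ▸ mem_insert _ _)
  choose U hU using hdom
  refine ⟨U, fun x => (hmP.1 _ (hU x)).1, fun x => (hmP.1 _ (hU x)).2.1, fun x y hxy hyx => ?_⟩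
  exact hmP.2 (x, U x) (hU x) (y, U y) (hU y) hxy hyx

theorem stmt7 {X Y : Type*} [TopologicalSpace X] [TopologicalSpace Y] [T1Space X]
    [LindelofSpace Y]
    (hsc : ∀ S : Set X, S.Nonempty → ∃ x ∈ S, ∃ U : Set X, IsOpen U ∧ U ∩ S = {x})
    (W0 : Set (Set (X × Y))) (hW0o : ∀ V ∈ W0, IsOpen V) (hW0c : ⋃₀ W0 = Set.univ) :
    ∃ W' : Set (Set X × Set Y),
      IsBoxCover W' ∧ BoxRefines W' W0 ∧ IsOmegaInjective W' := by
  classical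
  obtain ⟨U, hUo, hUx, hUasym⟩ := exists_asym_selection hsc
  have hpick : ∀ x : X, ∀ y : Y, ∃ A : Set X, ∃ B : Set Y,
      IsOpen A ∧ IsOpen B ∧ x ∈ A ∧ y ∈ B ∧ ∃ V ∈ W0, A ×ˢ B ⊆ V := by
    intro x y
    have hxy : ((x, y) : X × Y) ∈ ⋃₀ W0 := by rw [hW0c]; trivial
    obtain ⟨V, hV, hxyV⟩ := hxy
    obtain ⟨A, B, hA, hB, hxA, hyB, hsub⟩ := (isOpen_prod_iff.mp (hW0o V hV)) x y hxyV
    exact ⟨A, B, hA, hB, hxA, hyB, V, hV, hsub⟩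
  choose A B hAo hBo hxA hyB V hVW0 hsub using hpick
  have hcover : ∀ x : X, ∃ t : Set Y, t.Countable ∧ (univ : Set Y) ⊆ ⋃ y ∈ t, B x y := by
    intro x
    exact isLindelof_univ.elim_countable_subcover (B x) (hBo x)
      (fun y _ => mem_iUnion.mpr ⟨y, hyB x y⟩)
  choose t ht hcov using hcover
  refine ⟨{w | ∃ x : X, ∃ y ∈ t x, w = (A x y ∩ U x, B x y)}, ⟨?_, ?_⟩, ?_, ?_⟩
  · rintro w ⟨x, y, hy, rfl⟩
    exact ⟨(hAo x y).inter (hUo x), hBo x y⟩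
  · rintro ⟨x, y⟩
    have : y ∈ ⋃ y' ∈ t x, B x y' := hcov x (mem_univ y)
    obtain ⟨y', hy', hyB'⟩ := mem_iUnion₂.mp this
    exact ⟨(A x y' ∩ U x, B x y'), ⟨x, y', hy', rfl⟩, ⟨hxA x y', hUx x⟩, hyB'⟩
  · rintro w ⟨x, y, hy, rfl⟩
    exact ⟨V x y, hVW0 x y, Subset.trans
      (prod_mono inter_subset_left (Subset.refl _)) (hsub x y)⟩
  · intro A₀
    rcases eq_empty_or_nonempty {B₀ : Set Y | (A₀, B₀) ∈
        {w | ∃ x : X, ∃ y ∈ t x, w = (A x y ∩ U x, B x y)}} with he | ⟨B₀, hB₀⟩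
    · rw [he]; exact countable_empty
    · obtain ⟨x₀, y₀, hy₀, heq₀⟩ := hB₀
      have hA₀ : A₀ = A x₀ y₀ ∩ U x₀ := congrArg Prod.fst heq₀
      refine Countable.mono ?_ ((ht x₀).image (B x₀))
      rintro B₁ ⟨x₁, y₁, hy₁, heq₁⟩
      have hA₁ : A₀ = A x₁ y₁ ∩ U x₁ := congrArg Prod.fst heq₁
      have hB₁ : B₁ = B x₁ y₁ := congrArg Prod.snd heq₁
      have hx₀A : x₀ ∈ A₀ := by rw [hA₀]; exact ⟨hxA x₀ y₀, hUx x₀⟩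
      have hx₁A : x₁ ∈ A₀ := by rw [hA₁]; exact ⟨hxA x₁ y₁, hUx x₁⟩
      have hx01 : x₀ = x₁ := by
        apply hUasym
        · rw [hA₁] at hx₀A; exact hx₀A.2
        · rw [hA₀] at hx₁A; exact hx₁A.2
      exact ⟨y₁, hx01 ▸ hy₁, by rw [hB₁, hx01]⟩
end

section
/- Let X be a Lindelöf T1 space of cardinality ℵ₁ and Y a Lindelöf space. Then every open covering of X × Y has an ω-injective refinement by open boxes. -/
open Set TopologicalSpace

universe u v w

open Cardinal in
/-- Refinement-picking lemma: inside an open `A ∋ x` in a T1 space we can find an open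
`A' ∋ x` which is either countable or avoids a given countable family of "used" sets. -/
theorem pick_exists {X : Type u} [TopologicalSpace X] [T1Space X]
    (x : X) (A : Set X) (hA : IsOpen A) (hx : x ∈ A)
    (used : Set (Set X)) (hused : used.Countable) :
    ∃ A', IsOpen A' ∧ x ∈ A' ∧ A' ⊆ A ∧ (A'.Countable ∨ A' ∉ used) := by
  by_cases hc : A.Countable
  · exact ⟨A, hA, hx, subset_rfl, Or.inl hc⟩
  · have h1 : ∃ F : Set X, (F.Finite ∧ F ⊆ A \ {x}) ∧ A \ F ∉ used := by
      by_contra hcon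
      push_neg at hcon
      set 𝓕 : Set (Set X) := {F : Set X | F.Finite ∧ F ⊆ A \ {x}} with h𝓕
      have hinj : Set.InjOn (fun F => A \ F) 𝓕 := by
        intro F1 hF1 F2 hF2 hEq
        have e1 : A \ (A \ F1) = F1 :=
          Set.diff_diff_cancel_left (hF1.2.trans Set.diff_subset)
        have e2 : A \ (A \ F2) = F2 :=
          Set.diff_diff_cancel_left (hF2.2.trans Set.diff_subset)
        rw [← e1, ← e2]
        simp only at hEq
        rw [hEq]
      have himg : (fun F => A \ F) '' 𝓕 ⊆ used := by
        rintro _ ⟨F, hF, rfl⟩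
        exact hcon F hF
      have hcount : 𝓕.Countable :=
        Set.countable_of_injective_of_countable_image hinj (hused.mono himg)
      have hAx : (A \ {x}).Countable := by
        rw [← Set.countable_coe_iff] at hcount ⊢
        have hmem : ∀ a : (A \ {x} : Set X), ({(a : X)} : Set X) ∈ 𝓕 := fun a =>
          ⟨Set.finite_singleton _, Set.singleton_subset_iff.2 a.2⟩
        have : Function.Injective (fun a : (A \ {x} : Set X) => (⟨{(a : X)}, hmem a⟩ : 𝓕)) := by
          intro a b hab
          apply Subtype.ext
          have := congrArg (fun z : 𝓕 => (z : Set X)) hab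
          simpa [Set.singleton_eq_singleton_iff] using this
        exact Function.Injective.countable this
      exact hc (((hAx.insert x).mono (fun a ha => by
        by_cases h : a = x
        · simp [h]
        · exact Set.mem_insert_of_mem _ ⟨ha, h⟩)))
    obtain ⟨F, ⟨hFfin, hFsub⟩, hFused⟩ := h1
    exact ⟨A \ F, hA.sdiff hFfin.isClosed,
      ⟨hx, fun hxF => (hFsub hxF).2 rfl⟩, Set.diff_subset, Or.inr hFused⟩

open Classical in
/-- A choice function realizing `pick_exists`. -/
noncomputable def pickA {X : Type u} [TopologicalSpace X]
    (x : X) (A : Set X) (used : Set (Set X)) : Set X :=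
  if h : ∃ A', IsOpen A' ∧ x ∈ A' ∧ A' ⊆ A ∧ (A'.Countable ∨ A' ∉ used) then h.choose else A

theorem pickA_spec {X : Type u} [TopologicalSpace X] [T1Space X]
    (x : X) (A : Set X) (hA : IsOpen A) (hx : x ∈ A)
    (used : Set (Set X)) (hused : used.Countable) :
    IsOpen (pickA x A used) ∧ x ∈ pickA x A used ∧ pickA x A used ⊆ A ∧
      ((pickA x A used).Countable ∨ pickA x A used ∉ used) := by
  have h := pick_exists x A hA hx used hused
  unfold pickA
  rw [dif_pos h]
  exact h.choose_spec

/-- The transfinite recursion refining the first factors of the slice covers. -/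
noncomputable def buildF {X : Type u} {Y : Type v} [TopologicalSpace X]
    {T : Type w} [LinearOrder T] [WellFoundedLT T]
    (e : T → X) (Af : X → Y → Set X) (cs : X → Set Y) : T → Y → Set X :=
  WellFounded.fix (C := fun _ => Y → Set X) wellFounded_lt
    (fun t IH y => pickA (e t) (Af (e t) y)
      {D | ∃ s, ∃ h : s < t, ∃ z ∈ cs (e s), IH s h z = D})

theorem buildF_eq {X : Type u} {Y : Type v} [TopologicalSpace X]
    {T : Type w} [LinearOrder T] [WellFoundedLT T]
    (e : T → X) (Af : X → Y → Set X) (cs : X → Set Y) (t : T) :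
    buildF e Af cs t = fun y => pickA (e t) (Af (e t) y)
      {D | ∃ s, ∃ _ : s < t, ∃ z ∈ cs (e s), buildF e Af cs s z = D} := by
  unfold buildF
  exact WellFounded.fix_eq _ _ t

theorem stmt11 {X Y : Type*} [TopologicalSpace X] [TopologicalSpace Y] [T1Space X]
    [LindelofSpace X] [LindelofSpace Y]
    (hcard : Cardinal.mk X = Cardinal.aleph 1)
    (W0 : Set (Set (X × Y))) (hW0o : ∀ V ∈ W0, IsOpen V) (hW0c : ⋃₀ W0 = Set.univ) :
    ∃ W' : Set (Set X × Set Y),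
      IsBoxCover W' ∧ BoxRefines W' W0 ∧ IsOmegaInjective W' := by
  classical
  have slice : ∀ (x : X) (y : Y), ∃ (A : Set X) (B : Set Y),
      IsOpen A ∧ IsOpen B ∧ x ∈ A ∧ y ∈ B ∧ ∃ V ∈ W0, A ×ˢ B ⊆ V := by
    intro x y
    have hxy : (x, y) ∈ ⋃₀ W0 := by rw [hW0c]; exact Set.mem_univ _
    obtain ⟨V, hV, hmem⟩ := hxy
    obtain ⟨u, v, hu, hv, hxu, hyv, huv⟩ := (isOpen_prod_iff.1 (hW0o V hV)) x y hmem
    exact ⟨u, v, hu, hv, hxu, hyv, V, hV, huv⟩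
  choose Af Bf hAo hBo hxA hyB href using slice
  have hsub : ∀ x : X, ∃ c : Set Y, c.Countable ∧ (Set.univ : Set Y) ⊆ ⋃ y ∈ c, Bf x y :=
    fun x => isLindelof_univ.elim_countable_subcover (Bf x) (hBo x)
      (fun z _ => Set.mem_iUnion.2 ⟨z, hyB x z⟩)
  choose cs hcsc hcscov using hsub
  obtain ⟨e⟩ : Nonempty ((Cardinal.mk X).ord.ToType ≃ X) := by
    rw [← Cardinal.eq, Cardinal.mk_ord_toType]
  have hIio : ∀ t : (Cardinal.mk X).ord.ToType, (Set.Iio t).Countable := by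
    intro t
    rw [Cardinal.countable_iff_lt_aleph_one]
    calc Cardinal.mk (Set.Iio t) < Cardinal.mk X := Cardinal.mk_Iio_ord_toType t
    _ = Cardinal.aleph 1 := hcard
  set F : (Cardinal.mk X).ord.ToType → Y → Set X := buildF (⇑e) Af cs with hFdef
  have hused : ∀ t : (Cardinal.mk X).ord.ToType,
      {D : Set X | ∃ s, ∃ _ : s < t, ∃ z ∈ cs (e s), F s z = D}.Countable := by
    intro t
    have heq : {D : Set X | ∃ s, ∃ _ : s < t, ∃ z ∈ cs (e s), F s z = D}
        = ⋃ s ∈ Set.Iio t, (F s) '' (cs (e s)) := by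
      ext D
      constructor
      · rintro ⟨s, hs, z, hz, hD⟩
        exact Set.mem_biUnion hs ⟨z, hz, hD⟩
      · intro hmem
        obtain ⟨s, hs, hD'⟩ := Set.mem_iUnion₂.1 hmem
        obtain ⟨z, hz, hD⟩ := hD'
        exact ⟨s, hs, z, hz, hD⟩
    rw [heq]
    exact (hIio t).biUnion fun s _ => (hcsc (e s)).image _
  have hF : ∀ (t : (Cardinal.mk X).ord.ToType) (y : Y),
      IsOpen (F t y) ∧ e t ∈ F t y ∧ F t y ⊆ Af (e t) y ∧
        ((F t y).Countable ∨
          F t y ∉ {D : Set X | ∃ s, ∃ _ : s < t, ∃ z ∈ cs (e s), F s z = D}) := by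
    intro t y
    have heq : F t y = pickA (e t) (Af (e t) y)
        {D : Set X | ∃ s, ∃ _ : s < t, ∃ z ∈ cs (e s), F s z = D} := by
      rw [hFdef]
      exact congrFun (buildF_eq (⇑e) Af cs t) y
    rw [heq]
    exact pickA_spec (e t) (Af (e t) y) (hAo (e t) y) (hxA (e t) y)
      {D : Set X | ∃ s, ∃ _ : s < t, ∃ z ∈ cs (e s), F s z = D} (hused t)
  refine ⟨{w : Set X × Set Y | ∃ t, ∃ y ∈ cs (e t), w = (F t y, Bf (e t) y)}, ⟨?_, ?_⟩, ?_, ?_⟩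
  · rintro w ⟨t, y, hy, rfl⟩
    exact ⟨(hF t y).1, hBo (e t) y⟩
  · rintro ⟨x, y₀⟩
    obtain ⟨y, hy, hy₀⟩ := Set.mem_iUnion₂.1 (hcscov x (Set.mem_univ y₀))
    refine ⟨(F (e.symm x) y, Bf x y), ⟨e.symm x, y, ?_, ?_⟩, ?_, hy₀⟩
    · rwa [e.apply_symm_apply]
    · rw [e.apply_symm_apply]
    · have := (hF (e.symm x) y).2.1
      rwa [e.apply_symm_apply] at this
  · rintro w ⟨t, y, hy, rfl⟩
    obtain ⟨V, hV, hAB⟩ := href (e t) y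
    exact ⟨V, hV, Set.Subset.trans (Set.prod_mono_left (hF t y).2.2.1) hAB⟩
  · intro D
    by_cases hD : D.Countable
    · refine (hD.biUnion (fun x _ => (hcsc x).image (Bf x))).mono ?_
      rintro B ⟨t, y, hy, hw⟩
      have hDeq : D = F t y := congrArg Prod.fst hw
      have hBeq : B = Bf (e t) y := congrArg Prod.snd hw
      have hx : e t ∈ D := by rw [hDeq]; exact (hF t y).2.1
      exact Set.mem_biUnion hx ⟨y, hy, hBeq.symm⟩
    · rcases Set.eq_empty_or_nonempty
        {B : Set Y | (D, B) ∈ {w : Set X × Set Y | ∃ t, ∃ y ∈ cs (e t),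
          w = (F t y, Bf (e t) y)}} with he | ⟨B₀, hB₀⟩
      · rw [he]; exact Set.countable_empty
      · obtain ⟨t₀, y₀, hy₀, hw₀⟩ := hB₀
        have hD₀ : D = F t₀ y₀ := congrArg Prod.fst hw₀
        have key : ∀ t y, y ∈ cs (e t) → D = F t y → t = t₀ := by
          intro t y hy hDt
          rcases lt_trichotomy t t₀ with h | h | h
          · exfalso
            rcases (hF t₀ y₀).2.2.2 with hcnt | hnot
            · exact hD (by rw [hD₀]; exact hcnt)
            · exact hnot ⟨t, h, y, hy, by rw [← hDt, ← hD₀]⟩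
          · exact h
          · exfalso
            rcases (hF t y).2.2.2 with hcnt | hnot
            · exact hD (by rw [hDt]; exact hcnt)
            · exact hnot ⟨t₀, h, y₀, hy₀, by rw [← hD₀, ← hDt]⟩
        refine ((hcsc (e t₀)).image (Bf (e t₀))).mono ?_
        rintro B ⟨t, y, hy, hw⟩
        have hDeq : D = F t y := congrArg Prod.fst hw
        have hBeq : B = Bf (e t) y := congrArg Prod.snd hw
        have ht : t = t₀ := key t y hy hDeq
        subst ht
        exact ⟨y, hy, hBeq.symm⟩
end

section
/- A G_δ subset G of the cube I^{ω₁} (I = [0,1]) is Lindelöf if, and only if, there exists α < ω₁ such that G = p_β⁻¹[p_β[G]] for all β ≥ α, where p_β : I^{ω₁} → I^β is the projection. -/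
/-!
If `G = ⋂ₙ Uₙ` is Lindelöf, countably many basic boxes inside `Uₙ` cover `G` for each `n`; the
countably many coordinates these boxes mention are bounded by some `α < ω₁`, and membership in `G`
depends only on the coordinates below `α`. Conversely, if `G` depends only on the coordinates
below `α`, then `G = p⁻¹(p G)` for the projection `p` onto the second-countable cube `I^α`; being a
closed map with compact fibres, `p` pulls the Lindelöf set `p G` back to a Lindelöf set.
-/

open Set Cardinal

/-- The ordinal `ω₁` as a (linearly ordered) type. -/
noncomputable abbrev Omega1 : Type := (Cardinal.aleph 1).ord.ToType

namespace Omega1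

theorem countable_Iio (α : Omega1) : (Iio α).Countable := by
  rw [← le_aleph0_iff_set_countable, ← lt_aleph_one_iff]
  simpa using mk_Iio_lt α (by simp)

theorem exists_subset_Iio_of_countable {S : Set Omega1} (hS : S.Countable) :
    ∃ α : Omega1, S ⊆ Iio α := by
  have hcard : #S < Order.cof Omega1 := by
    rw [Ordinal.cof_toType, isRegular_aleph_one.cof_ord, lt_aleph_one_iff]
    exact le_aleph0_iff_set_countable.2 hS
  exact not_isCofinal_iff.mp fun hcof => (Order.cof_le hcof).not_gt hcard

end Omega1

theorem dependsOn_mem_iff {ι : Type*} {X : ι → Type*} {G : Set (Π i, X i)} {C : Set ι} :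
    DependsOn (· ∈ G) C ↔ ∀ z ∈ G, ∀ w, (∀ i ∈ C, w i = z i) → w ∈ G := by
  refine ⟨fun h z hz w hwz => (h hwz).mpr hz,
    fun h x y hxy => propext ⟨fun hx => ?_, fun hy => ?_⟩⟩
  · exact h x hx y fun i hi => (hxy i hi).symm
  · exact h y hy x hxy

section Lindelof

variable {X Y : Type*} [TopologicalSpace X] [TopologicalSpace Y]

theorem IsLindelof.preimage_of_isClosedMap {f : X → Y} (hf : IsClosedMap f) {S : Set Y}
    (hfib : ∀ y ∈ S, IsCompact (f ⁻¹' {y})) (hS : IsLindelof S) : IsLindelof (f ⁻¹' S) := by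
  refine isLindelof_of_countable_subcover fun U hUo hcover => ?_
  have hfin : ∀ y ∈ S, ∃ t : Finset _, f ⁻¹' {y} ⊆ ⋃ i ∈ t, U i := fun y hy =>
    (hfib y hy).elim_finite_subcover U hUo
      ((preimage_mono (singleton_subset_iff.2 hy)).trans hcover)
  choose! t ht using hfin
  -- the tube lemma for the closed map `f`
  let W y := (f '' (⋃ i ∈ t y, U i)ᶜ)ᶜ
  have hWo : ∀ y, IsOpen (W y) := fun y =>
    (hf _ (isOpen_biUnion fun i _ => hUo i).isClosed_compl).isOpen_compl
  have hyW : ∀ y ∈ S, y ∈ W y := by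
    rintro y hy ⟨x, hx, rfl⟩
    exact hx (ht _ hy rfl)
  have hWU : ∀ y, f ⁻¹' W y ⊆ ⋃ i ∈ t y, U i := fun y x hx => by
    by_contra hxU
    exact hx (mem_image_of_mem f hxU)
  obtain ⟨T, hTc, hST⟩ := hS.elim_countable_subcover (fun y : S => W y) (fun y => hWo y)
    fun y hy => mem_iUnion.2 ⟨⟨y, hy⟩, hyW y hy⟩
  refine ⟨⋃ y ∈ T, t y.1, hTc.biUnion fun y _ => (t y.1).countable_toSet, fun x hx => ?_⟩
  obtain ⟨y, hyT, hxW⟩ := mem_iUnion₂.1 (hST hx)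
  obtain ⟨i, hit, hxi⟩ := mem_iUnion₂.1 (hWU y hxW)
  exact mem_iUnion₂.2 ⟨i, mem_iUnion₂.2 ⟨y, hyT, hit⟩, hxi⟩

end Lindelof

section Product

variable {ι : Type*} {X : ι → Type*} [∀ i, TopologicalSpace (X i)]

theorem isLindelof_of_dependsOn [∀ i, CompactSpace (X i)] [∀ i, T2Space (X i)]
    [∀ i, SecondCountableTopology (X i)] {G : Set (Π i, X i)} {C : Set ι} (hC : C.Countable)
    (hG : DependsOn (· ∈ G) C) : IsLindelof G := by
  have : Countable C := hC.to_subtype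
  have hp : Continuous C.domRestrict := continuous_pi fun i => continuous_apply (A := X) i.1
  have hsat : C.domRestrict ⁻¹' (C.domRestrict '' G) = G := by
    refine (subset_preimage_image _ _).antisymm' ?_
    rintro x ⟨z, hz, hzx⟩
    exact dependsOn_mem_iff.mp hG z hz x fun i hi => (congrFun hzx ⟨i, hi⟩).symm
  rw [← hsat]
  exact (HereditarilyLindelofSpace.isLindelof _).preimage_of_isClosedMap hp.isClosedMap
    fun y _ => (isClosed_singleton.preimage hp).isCompact

theorem IsLindelof.exists_countable_eqOn_mem_of_subset_isOpen {K U : Set (Π i, X i)}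
    (hK : IsLindelof K) (hU : IsOpen U) (hKU : K ⊆ U) :
    ∃ C : Set ι, C.Countable ∧ ∀ z ∈ K, ∀ w, (∀ i ∈ C, w i = z i) → w ∈ U := by
  have hbox : ∀ x ∈ K, ∃ (F : Finset ι) (u : Π i, Set (X i)),
      (∀ i ∈ F, IsOpen (u i) ∧ x i ∈ u i) ∧ (F : Set ι).pi u ⊆ U := fun x hx =>
    isOpen_pi_iff.mp hU x (hKU hx)
  choose! F u hFu hsub using hbox
  obtain ⟨T, hTc, hKT⟩ := hK.elim_countable_subcover (fun x : K => (F x : Set ι).pi (u x))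
    (fun x => isOpen_set_pi (F x).finite_toSet fun i hi => (hFu x x.2 i hi).1)
    fun x hx => mem_iUnion.2 ⟨⟨x, hx⟩, fun i hi => (hFu x hx i hi).2⟩
  refine ⟨⋃ x ∈ T, (F x : Set ι), hTc.biUnion fun x _ => (F x).countable_toSet,
    fun z hz w hwz => ?_⟩
  obtain ⟨x, hxT, hzx⟩ := mem_iUnion₂.1 (hKT hz)
  refine hsub x x.2 fun i hi => ?_
  rw [hwz i (mem_iUnion₂.2 ⟨x, hxT, hi⟩)]
  exact hzx i hi

theorem IsLindelof.exists_countable_dependsOn_of_isGδ {G : Set (Π i, X i)} (hL : IsLindelof G)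
    (hG : IsGδ G) : ∃ C : Set ι, C.Countable ∧ DependsOn (· ∈ G) C := by
  obtain ⟨T, hTo, hTc, rfl⟩ := hG
  have hsep : ∀ t ∈ T, ∃ C : Set ι, C.Countable ∧
      ∀ z ∈ ⋂₀ T, ∀ w, (∀ i ∈ C, w i = z i) → w ∈ t := fun t ht =>
    hL.exists_countable_eqOn_mem_of_subset_isOpen (hTo t ht) (sInter_subset_of_mem ht)
  choose! C hCc hC using hsep
  refine ⟨⋃ t ∈ T, C t, hTc.biUnion hCc, dependsOn_mem_iff.2 fun z hz w hwz => ?_⟩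
  exact fun t ht => hC t ht z hz w fun i hi => hwz i (mem_biUnion ht hi)

end Product

theorem stmt12 (G : Set (Omega1 → unitInterval))
    (hG : ∃ U : ℕ → Set (Omega1 → unitInterval), (∀ n, IsOpen (U n)) ∧ G = ⋂ n, U n) :
    IsLindelof G ↔
      ∃ α : Omega1, ∀ β : Omega1, α ≤ β →
        ∀ z ∈ G, ∀ w : Omega1 → unitInterval, (∀ i, i < β → w i = z i) → w ∈ G := by
  constructor
  · intro hL
    obtain ⟨C, hCc, hdep⟩ := hL.exists_countable_dependsOn_of_isGδ (isGδ_iff_eq_iInter_nat.2 hG)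
    obtain ⟨α, hα⟩ := Omega1.exists_subset_Iio_of_countable hCc
    exact ⟨α, fun β hαβ => dependsOn_mem_iff.1 (hdep.mono (hα.trans (Iio_subset_Iio hαβ)))⟩
  · rintro ⟨α, hα⟩
    exact isLindelof_of_dependsOn (Omega1.countable_Iio α) (dependsOn_mem_iff.2 (hα α le_rfl))
end

section
/- Let Z be a metrizable space and {A_ξ : ξ < ω₁} an increasing (under inclusion) family of subsets covering Z such that every compact K ⊆ Z is contained in some A_α. If A_ξ ≠ Z for all ξ < ω₁, then Z is not productively Lindelöf. -/
open Set TopologicalSpace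

/-!
Being productively Lindelöf, `Z` is Lindelöf, hence separable metrizable, so it embeds in the
Hilbert cube `K`. Pick `x ξ ∉ A ξ`. The set `P` of these points is uncountable, yet every compact
set meets it in a countable set: a compact set lies in some `A γ`, and `x ξ ∈ A γ` forces `ξ < γ`.
Michael's space `Y = e(P) ∪ (K \ e(Z))`, in which the points of `e(P)` are isolated, is then
Lindelöf: countably many open sets cover the Lindelöf set `K \ e(Z)`, and what they leave out is
a compact subset of `e(Z)`, which contains only countably many points of `e(P)`. But in `Z × Y`
the graph `{(z, e z) | z ∈ P}` is closed, discrete and uncountable.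
-/

open Topology unitInterval

namespace TopologicalSpace

variable {X : Type*} [t : TopologicalSpace X] {S : Set X}

@[reducible] def isolate (S : Set X) : TopologicalSpace X where
  IsOpen U := ∀ x ∈ U, x ∉ S → U ∈ 𝓝 x
  isOpen_univ _ _ _ := Filter.univ_mem
  isOpen_inter _ _ hU hV x hx hxS := Filter.inter_mem (hU x hx.1 hxS) (hV x hx.2 hxS)
  isOpen_sUnion 𝒰 h𝒰 := by
    rintro x ⟨U, hU, hxU⟩ hxS
    exact Filter.mem_of_superset (h𝒰 U hU x hxU hxS) (subset_sUnion_of_mem hU)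

lemma isolate_le : isolate S ≤ t := fun _ hU _ hx _ => hU.mem_nhds hx

lemma isOpen_singleton_isolate {x : X} (hx : x ∈ S) : IsOpen[isolate S] {x} := by
  rintro y rfl hyS
  exact absurd hx hyS

lemma lindelofSpace_isolate (hS : IsLindelof Sᶜ)
    (hcount : ∀ F, IsClosed F → F ⊆ S → F.Countable) : @LindelofSpace X (isolate S) := by
  refine @LindelofSpace.mk X (isolate S) (@isLindelof_of_countable_subcover X (isolate S) univ
    fun {ι} U hU hcov => ?_)
  choose j hj using fun x => mem_iUnion.1 (hcov (mem_univ x))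
  obtain ⟨T, hT, hST⟩ := hS.elim_countable_subcover (fun i => interior (U i))
    (fun _ => isOpen_interior) fun x hx =>
      mem_iUnion.2 ⟨j x, mem_interior_iff_mem_nhds.2 (hU (j x) x (hj x) hx)⟩
  set G := ⋃ i ∈ T, interior (U i)
  have hG : Gᶜ.Countable := hcount _ (isOpen_biUnion fun _ _ => isOpen_interior).isClosed_compl
    (compl_subset_comm.1 hST)
  refine ⟨T ∪ j '' Gᶜ, hT.union (hG.image j), fun x _ => ?_⟩
  by_cases hx : x ∈ G
  · obtain ⟨i, hi, hxi⟩ := mem_iUnion₂.1 hx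
    exact mem_iUnion₂.2 ⟨i, Or.inl hi, interior_subset hxi⟩
  · exact mem_iUnion₂.2 ⟨j x, Or.inr ⟨x, hx, rfl⟩, hj x⟩

end TopologicalSpace

-- A `def` rather than an `abbrev`, so that it does not inherit the subspace topology of `K`.
def MichaelSpace {K : Type*} (S D : Set K) : Type _ := ↥(D ∪ Sᶜ)

namespace MichaelSpace

variable {K : Type*} [TopologicalSpace K] {S D : Set K}

instance : TopologicalSpace (MichaelSpace S D) := isolate (X := ↥(D ∪ Sᶜ)) (Subtype.val ⁻¹' S)

lemma continuous_val : Continuous fun y : MichaelSpace S D => (y.1 : K) :=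
  continuous_subtype_val.comp (continuous_id_of_le (isolate_le (X := ↥(D ∪ Sᶜ))))

lemma isOpen_singleton {y : MichaelSpace S D} (hy : y.1 ∈ S) : IsOpen {y} :=
  isOpen_singleton_isolate (X := ↥(D ∪ Sᶜ)) hy

lemma lindelofSpace [CompactSpace K] [HereditarilyLindelofSpace K]
    (hD : ∀ C, IsCompact C → C ⊆ S → (C ∩ D).Countable) : LindelofSpace (MichaelSpace S D) := by
  refine lindelofSpace_isolate (X := ↥(D ∪ Sᶜ)) (HereditarilyLindelofSpace.isLindelof _)
    fun F hF hFS => ?_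
  obtain ⟨C, hC, rfl⟩ := isClosed_induced_iff.1 hF
  have hCS : C ⊆ S := fun k hkC => by
    by_contra hkS
    exact hkS (hFS (show (⟨k, Or.inr hkS⟩ : ↥(D ∪ Sᶜ)) ∈ Subtype.val ⁻¹' C from hkC))
  refine ((hD C hC.isCompact hCS).preimage Subtype.val_injective).mono fun y hy => ?_
  exact ⟨hy, y.2.resolve_right (not_not.2 (hFS hy))⟩

end MichaelSpace

lemma countable_setOf_eq_of_isOpen_singleton {Z Y W : Type*} [TopologicalSpace Z]
    [TopologicalSpace Y] [TopologicalSpace W] [T2Space W] [LindelofSpace (Z × Y)]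
    {e : Z → W} {f : Y → W} (he : Continuous e) (hinj : Function.Injective e) (hf : Continuous f)
    (hsingleton : ∀ z y, e z = f y → IsOpen {y}) : {p : Z × Y | e p.1 = f p.2}.Countable := by
  have hclosed : IsClosed {p : Z × Y | e p.1 = f p.2} := isClosed_eq (by fun_prop) (by fun_prop)
  refine hclosed.isLindelof.countable_of_isDiscrete
    (isDiscrete_iff_forall_mem_exists_isOpen.2 fun p (hp : e p.1 = f p.2) => ?_)
  refine ⟨univ ×ˢ {p.2}, isOpen_univ.prod (hsingleton _ _ hp), Set.ext fun q => ?_⟩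
  simp only [mem_inter_iff, mem_prod, mem_univ, mem_singleton_iff, true_and, mem_ofPred_eq]
  constructor
  · rintro ⟨hq2, hq⟩
    exact Prod.ext (hinj (by rw [hq, hq2, hp])) hq2
  · rintro rfl
    exact ⟨rfl, hp⟩

theorem exists_lindelofSpace_not_lindelofSpace_prod {Z : Type*} {K : Type u}
    [TopologicalSpace Z] [TopologicalSpace K] [CompactSpace K] [T2Space K]
    [HereditarilyLindelofSpace K] {e : Z → K} (he : IsEmbedding e) {P : Set Z}
    (hP : ¬ P.Countable) (hPK : ∀ C, IsCompact C → (C ∩ P).Countable) :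
    ∃ (Y : Type u) (_ : TopologicalSpace Y), LindelofSpace Y ∧ ¬ LindelofSpace (Z × Y) := by
  refine ⟨MichaelSpace (range e) (e '' P), inferInstance,
    MichaelSpace.lindelofSpace fun C hC hCe => ?_, fun _ => hP ?_⟩
  · refine ((hPK _ ((he.isInducing.isCompact_preimage_iff hCe).2 hC)).image e).mono ?_
    rintro _ ⟨hkC, z, hz, rfl⟩
    exact ⟨z, ⟨hkC, hz⟩, rfl⟩
  · have hE := countable_setOf_eq_of_isOpen_singleton he.continuous he.injective
      (MichaelSpace.continuous_val (D := e '' P))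
      fun z _ hzy => MichaelSpace.isOpen_singleton (mem_range.2 ⟨z, hzy⟩)
    refine (hE.image Prod.fst).mono fun z hz => ?_
    exact ⟨(z, ⟨e z, Or.inl ⟨z, hz, rfl⟩⟩), rfl, rfl⟩

lemma ProductivelyLindelof.lindelofSpace {X : Type u} [TopologicalSpace X]
    (h : ProductivelyLindelof X) : LindelofSpace X :=
  have := h PUnit.{u + 1} inferInstance inferInstance
  .of_continuous_surjective (X := X × PUnit.{u + 1}) continuous_fst Prod.fst_surjective

theorem not_productivelyLindelof_of_countable_inter_isCompact {Z : Type u} [TopologicalSpace Z]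
    [MetrizableSpace Z] {P : Set Z} (hP : ¬ P.Countable)
    (hPK : ∀ C, IsCompact C → (C ∩ P).Countable) : ¬ ProductivelyLindelof Z := by
  intro hZ
  have := hZ.lindelofSpace
  let := metrizableSpaceMetric Z
  have : SecondCountableTopology (ULift.{u} (ℕ → I)) :=
    Homeomorph.ulift.isEmbedding.secondCountableTopology
  obtain ⟨F, hF⟩ := Metric.PiNatEmbed.exists_embedding_to_hilbert_cube (X := Z)
  obtain ⟨Y, _, hY, hZY⟩ :=
    exists_lindelofSpace_not_lindelofSpace_prod (Homeomorph.ulift.symm.isEmbedding.comp hF) hP hPK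
  exact hZY (hZ Y _ hY)

lemma Omega1.countable_Iio_s13 (ξ : Omega1) : (Iio ξ).Countable := by
  have := Cardinal.mk_Iio_lt ξ (by simp)
  rw [Cardinal.mk_ord_toType, Cardinal.lt_aleph_one_iff] at this
  exact Cardinal.le_aleph0_iff_set_countable.1 this

instance Omega1.uncountable : Uncountable Omega1 :=
  ⟨fun h => (Cardinal.mk_le_aleph0_iff.2 h).not_gt (by simp)⟩

theorem stmt13_general {Z : Type} [TopologicalSpace Z] [TopologicalSpace.MetrizableSpace Z]
    (A : Omega1 → Set Z) (hmono : Monotone A)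
    (hcomp : ∀ K : Set Z, IsCompact K → ∃ α, K ⊆ A α)
    (hne : ∀ ξ, A ξ ≠ Set.univ) :
    ¬ ProductivelyLindelof Z := by
  choose x hx using fun ξ => (ne_univ_iff_exists_notMem (A ξ)).1 (hne ξ)
  have hxK : ∀ K, IsCompact K → (x ⁻¹' K).Countable := fun K hK => by
    obtain ⟨γ, hγ⟩ := hcomp K hK
    exact (Omega1.countable_Iio_s13 γ).mono fun ξ hξ =>
      lt_of_not_ge fun hγξ => hx ξ (hmono hγξ (hγ hξ))
  refine not_productivelyLindelof_of_countable_inter_isCompact (P := range x) (fun hrange => ?_)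
    fun K hK => ((hxK K hK).image x).mono ?_
  · have := hrange.biUnion fun z _ => hxK {z} isCompact_singleton
    rw [biUnion_preimage_singleton, preimage_range] at this
    exact not_countable (countable_univ_iff.1 this)
  · rintro _ ⟨hzK, ξ, rfl⟩
    exact ⟨ξ, hzK, rfl⟩

theorem stmt13 {Z : Type} [TopologicalSpace Z] [TopologicalSpace.MetrizableSpace Z]
    (A : Omega1 → Set Z) (hmono : Monotone A) (hcover : ⋃ ξ, A ξ = Set.univ)
    (hcomp : ∀ K : Set Z, IsCompact K → ∃ α, K ⊆ A α)
    (hne : ∀ ξ, A ξ ≠ Set.univ) :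
    ¬ ProductivelyLindelof Z :=
  stmt13_general A hmono hcomp hne
end

section
/- Let X be an Alster space (regular). Then X is weakly Alster: for every family G of G_δ subsets of βX such that {G ∩ X : G ∈ G} is an Alster covering of X, there is a σ-compact Y ⊆ βX with X ⊆ Y ⊆ ⋃G. -/
open Set TopologicalSpace

open Set TopologicalSpace

/-- `𝒢` is an Alster covering of `X`: a cover by Gδ sets such that every compact
subset of `X` is contained in a single member. -/
def IsAlsterCover {X : Type*} [TopologicalSpace X] (𝒢 : Set (Set X)) : Prop :=
  (∀ G ∈ 𝒢, IsGδ G) ∧ ⋃₀ 𝒢 = Set.univ ∧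
    ∀ K : Set X, IsCompact K → ∃ G ∈ 𝒢, K ⊆ G

/-- `X` is an Alster space: every Alster covering has a countable subcovering. -/
def AlsterSpace (X : Type*) [TopologicalSpace X] : Prop :=
  ∀ 𝒢 : Set (Set X), IsAlsterCover 𝒢 →
    ∃ 𝒢' ⊆ 𝒢, 𝒢'.Countable ∧ ⋃₀ 𝒢' = Set.univ

/-- `X` is weakly Alster. -/
def WeaklyAlster (X : Type u) [TopologicalSpace X] : Prop :=
  ∀ 𝒢 : Set (Set (StoneCech X)), (∀ G ∈ 𝒢, IsGδ G) →
    IsAlsterCover ((fun G => stoneCechUnit ⁻¹' G) '' 𝒢) →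
    ∃ Y : Set (StoneCech X),
      (∃ K : ℕ → Set (StoneCech X), (∀ n, IsCompact (K n)) ∧ Y = ⋃ n, K n) ∧
      Set.range (stoneCechUnit : X → StoneCech X) ⊆ Y ∧ Y ⊆ ⋃₀ 𝒢


lemma isGδ_preimage' {α β : Type*} [TopologicalSpace α] [TopologicalSpace β]
    {f : α → β} (hf : Continuous f) {s : Set β} (hs : IsGδ s) : IsGδ (f ⁻¹' s) := by
  obtain ⟨U, hU, rfl⟩ := hs.eq_iInter_nat
  rw [preimage_iInter]
  exact .iInter_of_isOpen fun n => (hU n).preimage hf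

lemma exists_compact_gdelta_between {Z : Type*} [TopologicalSpace Z] [T2Space Z]
    [LocallyCompactSpace Z] {K G : Set Z} (hK : IsCompact K) (hG : IsGδ G) (hKG : K ⊆ G) :
    ∃ H : Set Z, IsCompact H ∧ IsGδ H ∧ K ⊆ H ∧ H ⊆ G := by
  obtain ⟨U, hUopen, rfl⟩ := hG.eq_iInter_nat
  have hKU : ∀ n, K ⊆ U n := fun n => hKG.trans (iInter_subset U n)
  have key : ∀ W : Set Z, ∃ L : Set Z,
      IsOpen W → K ⊆ W → IsCompact L ∧ K ⊆ interior L ∧ L ⊆ W := by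
    intro W
    by_cases h1 : IsOpen W ∧ K ⊆ W
    · obtain ⟨L, hL⟩ := exists_compact_between hK h1.1 h1.2
      exact ⟨L, fun _ _ => hL⟩
    · exact ⟨∅, fun h2 h3 => absurd ⟨h2, h3⟩ h1⟩
  choose F hF using key
  set V : ℕ → Set Z := fun n =>
    Nat.rec (F (U 0)) (fun n prev => F (U (n + 1) ∩ interior prev)) n with hV
  have hprop : ∀ n, IsCompact (V n) ∧ K ⊆ interior (V n) ∧
      V n ⊆ U n ∧ (∀ m, n = m + 1 → V n ⊆ interior (V m)) := by
    intro n
    induction n with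
    | zero =>
      have h0 := hF (U 0) (hUopen 0) (hKU 0)
      exact ⟨h0.1, h0.2.1, h0.2.2, fun m hm => by omega⟩
    | succ n ih =>
      have hopen : IsOpen (U (n + 1) ∩ interior (V n)) :=
        (hUopen (n + 1)).inter isOpen_interior
      have hKsub : K ⊆ U (n + 1) ∩ interior (V n) :=
        subset_inter (hKU (n + 1)) ih.2.1
      have hs := hF (U (n + 1) ∩ interior (V n)) hopen hKsub
      refine ⟨hs.1, hs.2.1, hs.2.2.trans inter_subset_left, ?_⟩
      rintro m hm
      have : m = n := by omega
      subst this
      exact hs.2.2.trans inter_subset_right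
  have hnest : ∀ n, V (n + 1) ⊆ interior (V n) := fun n =>
    (hprop (n + 1)).2.2.2 n rfl
  refine ⟨⋂ n, V n, ?_, ?_, ?_, ?_⟩
  · exact (hprop 0).1.of_isClosed_subset
      (isClosed_iInter fun n => (hprop n).1.isClosed) (iInter_subset V 0)
  · have : (⋂ n, V n) = ⋂ n, interior (V n) := by
      apply Subset.antisymm
      · intro x hx
        apply mem_iInter.2
        intro n
        exact hnest n (mem_iInter.1 hx (n + 1))
      · exact iInter_mono fun n => interior_subset
    rw [this]
    exact .iInter_of_isOpen fun n => isOpen_interior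
  · exact subset_iInter fun n => ((hprop n).2.1).trans interior_subset
  · exact iInter_mono fun n => (hprop n).2.2.1

theorem stmt14 {X : Type u} [TopologicalSpace X] [T35Space X]
    (h : AlsterSpace X) : WeaklyAlster X := by
  intro 𝒢 hGδ hAC
  set ℋ : Set (Set X) := {S | ∃ H : Set (StoneCech X), IsCompact H ∧ IsGδ H ∧
    (∃ G ∈ 𝒢, H ⊆ G) ∧ S = stoneCechUnit ⁻¹' H} with hℋ
  -- every compact K ⊆ X is contained in a member of ℋ
  have hcomp : ∀ K : Set X, IsCompact K → ∃ S ∈ ℋ, K ⊆ S := by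
    intro K hK
    obtain ⟨S, hS, hKS⟩ := hAC.2.2 K hK
    obtain ⟨G, hG, rfl⟩ := hS
    have himg : IsCompact (stoneCechUnit '' K) := hK.image continuous_stoneCechUnit
    have hsub : stoneCechUnit '' K ⊆ G := image_subset_iff.2 hKS
    obtain ⟨H, hHc, hHGδ, hKH, hHG⟩ :=
      exists_compact_gdelta_between himg (hGδ G hG) hsub
    exact ⟨stoneCechUnit ⁻¹' H, ⟨H, hHc, hHGδ, ⟨G, hG, hHG⟩, rfl⟩,
      fun x hx => hKH (mem_image_of_mem _ hx)⟩
  have hACℋ : IsAlsterCover ℋ := by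
    refine ⟨?_, ?_, hcomp⟩
    · rintro S ⟨H, _, hHGδ, _, rfl⟩
      exact isGδ_preimage' continuous_stoneCechUnit hHGδ
    · apply eq_univ_of_forall
      intro x
      obtain ⟨S, hS, hxS⟩ := hcomp {x} isCompact_singleton
      exact ⟨S, hS, hxS rfl⟩
  obtain ⟨𝒢', h𝒢'sub, h𝒢'cnt, h𝒢'cov⟩ := h ℋ hACℋ
  rcases 𝒢'.eq_empty_or_nonempty with rfl | hne
  · refine ⟨∅, ⟨fun _ => ∅, fun _ => isCompact_empty, by simp⟩, ?_, empty_subset _⟩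
    rintro y ⟨x, rfl⟩
    have : x ∈ ⋃₀ (∅ : Set (Set X)) := h𝒢'cov ▸ mem_univ x
    simp at this
  · obtain ⟨f, hf⟩ := h𝒢'cnt.exists_eq_range hne
    have hmem : ∀ n, f n ∈ ℋ := fun n => h𝒢'sub (hf ▸ mem_range_self n)
    choose H hHc hHGδ hHG hfH using hmem
    refine ⟨⋃ n, H n, ⟨H, hHc, rfl⟩, ?_, ?_⟩
    · rintro y ⟨x, rfl⟩
      have : x ∈ ⋃₀ 𝒢' := h𝒢'cov ▸ mem_univ x
      obtain ⟨S, hS, hxS⟩ := this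
      rw [hf] at hS
      obtain ⟨n, rfl⟩ := hS
      rw [hfH n] at hxS
      exact mem_iUnion.2 ⟨n, hxS⟩
    · apply iUnion_subset
      intro n
      obtain ⟨G, hG, hHGsub⟩ := hHG n
      exact hHGsub.trans (subset_sUnion_of_mem hG)
end

section
/- Every weakly Alster space is productively Lindelöf. -/
open Set TopologicalSpace

open Set TopologicalSpace

open Set unitInterval in
lemma exists_open_stoneCech {X : Type u} [TopologicalSpace X] [T35Space X]
    {A : Set X} (hA : IsOpen A) {x : X} (hx : x ∈ A) :
    ∃ V : Set (StoneCech X), IsOpen V ∧ stoneCechUnit x ∈ V ∧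
      stoneCechUnit ⁻¹' V ⊆ A := by
  obtain ⟨f, cf, hfx, hfK⟩ :=
    CompletelyRegularSpace.completely_regular x Aᶜ hA.isClosed_compl (by simpa)
  refine ⟨(fun p => ((stoneCechExtend cf p : I) : ℝ))⁻¹' Set.Iio 1, ?_, ?_, ?_⟩
  · exact isOpen_Iio.preimage (continuous_subtype_val.comp (continuous_stoneCechExtend cf))
  · have h1 : stoneCechExtend cf (stoneCechUnit x) = f x :=
      congrFun (stoneCechExtend_extends cf) x
    simp [Set.mem_preimage, h1, hfx]
  · intro y hy
    by_contra hyA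
    have h1 : f y = 1 := hfK hyA
    have h2 : stoneCechExtend cf (stoneCechUnit y) = f y :=
      congrFun (stoneCechExtend_extends cf) y
    simp [Set.mem_preimage, h2, h1] at hy

theorem stmt15 {X : Type u} [TopologicalSpace X] [T35Space X]
    (h : WeaklyAlster X) : ProductivelyLindelof X := by
  intro Z _inst hZ
  constructor
  rcases isEmpty_or_nonempty Z with hE | hNe
  · have : IsEmpty (X × Z) := inferInstance
    rw [Set.univ_eq_empty_iff.2 this]
    exact isLindelof_empty
  apply isLindelof_of_countable_subcover
  intro ι U hUo hUc
  -- Step 1: boxes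
  have step1 : ∀ (x : X) (z : Z), ∃ (i : ι) (V : Set (StoneCech X)) (B : Set Z),
      IsOpen V ∧ IsOpen B ∧ stoneCechUnit x ∈ V ∧ z ∈ B ∧
        (stoneCechUnit ⁻¹' V) ×ˢ B ⊆ U i := by
    intro x z
    obtain ⟨i, hi⟩ := mem_iUnion.1 (hUc (mem_univ (x, z)))
    obtain ⟨A, B, hA, hB, hxA, hzB, hsub⟩ := isOpen_prod_iff.1 (hUo i) x z hi
    obtain ⟨V, hVo, hVx, hVsub⟩ := exists_open_stoneCech hA hxA
    exact ⟨i, V, B, hVo, hB, hVx, hzB, fun p hp => hsub ⟨hVsub hp.1, hp.2⟩⟩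
  choose ind V B hVo hBo hxV hzB hbox using step1
  -- Step 2: finite subcovers for compact sets
  have step2 : ∀ (C : {C : Set X // IsCompact C}) (z : Z),
      ∃ t : Finset X, (C : Set X) ⊆ ⋃ x ∈ t, stoneCechUnit ⁻¹' V x z := by
    intro C z
    exact C.2.elim_finite_subcover (fun x => stoneCechUnit ⁻¹' V x z)
      (fun x => (hVo x z).preimage continuous_stoneCechUnit)
      (fun c _ => mem_iUnion.2 ⟨c, hxV c z⟩)
  choose t ht using step2
  -- Step 3: Lindelöf of Z for each compact C
  have step3 : ∀ C : {C : Set X // IsCompact C}, ∃ zs : ℕ → Z,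
      ∀ z : Z, ∃ n, z ∈ ⋂ x ∈ t C (zs n), B x (zs n) := by
    intro C
    obtain ⟨s, hsc, hscov⟩ := hZ.isLindelof_univ.elim_countable_subcover
      (fun z => ⋂ x ∈ t C z, B x z)
      (fun z => isOpen_biInter_finset fun x _ => hBo x z)
      (fun z _ => mem_iUnion.2 ⟨z, mem_iInter₂.2 fun x _ => hzB x z⟩)
    have hsne : s.Nonempty := by
      obtain ⟨z0⟩ := hNe
      obtain ⟨z', hz's, _⟩ := mem_iUnion₂.1 (hscov (mem_univ z0))
      exact ⟨z', hz's⟩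
    obtain ⟨zs, hzseq⟩ := hsc.exists_eq_range hsne
    refine ⟨zs, fun z => ?_⟩
    obtain ⟨z', hz's, hzz'⟩ := mem_iUnion₂.1 (hscov (mem_univ z))
    rw [hzseq] at hz's
    obtain ⟨n, rfl⟩ := hz's
    exact ⟨n, hzz'⟩
  choose zs hzs using step3
  -- Step 4: the Gδ sets
  set G : {C : Set X // IsCompact C} → Set (StoneCech X) :=
    fun C => ⋂ n, ⋃ x ∈ t C (zs C n), V x (zs C n) with hGdef
  have hGgδ : ∀ C, IsGδ (G C) := fun C =>
    IsGδ.iInter fun n => (isOpen_biUnion fun x _ => hVo x (zs C n)).isGδ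
  have hCsubG : ∀ C : {C : Set X // IsCompact C},
      (C : Set X) ⊆ stoneCechUnit ⁻¹' G C := by
    intro C c hc
    simp only [hGdef, mem_preimage, mem_iInter]
    intro n
    obtain ⟨x, hxt, hcx⟩ := mem_iUnion₂.1 (ht C (zs C n) hc)
    exact mem_iUnion₂.2 ⟨x, hxt, hcx⟩
  -- apply weak Alster
  obtain ⟨Y, ⟨L, hLc, hYL⟩, hXY, hYG⟩ := h (Set.range G)
    (by rintro _ ⟨C, rfl⟩; exact hGgδ C)
    (by
      refine ⟨?_, ?_, ?_⟩
      · rintro _ ⟨_, ⟨C, rfl⟩, rfl⟩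
        simp only [hGdef, preimage_iInter]
        exact IsGδ.iInter_of_isOpen fun n =>
          (isOpen_biUnion fun x _ => hVo x (zs C n)).preimage continuous_stoneCechUnit
      · apply eq_univ_of_forall
        intro x
        exact ⟨stoneCechUnit ⁻¹' G ⟨{x}, isCompact_singleton⟩,
          ⟨G ⟨{x}, isCompact_singleton⟩, ⟨⟨{x}, isCompact_singleton⟩, rfl⟩, rfl⟩,
          hCsubG ⟨{x}, isCompact_singleton⟩ rfl⟩
      · intro K hK
        exact ⟨stoneCechUnit ⁻¹' G ⟨K, hK⟩, ⟨G ⟨K, hK⟩, ⟨⟨K, hK⟩, rfl⟩, rfl⟩,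
          hCsubG ⟨K, hK⟩⟩)
  -- Step 5: key covering property of ⋃₀ range G
  have key : ∀ p ∈ ⋃₀ Set.range G, ∀ z : Z,
      ∃ q : X × Z, p ∈ V q.1 q.2 ∧ z ∈ B q.1 q.2 := by
    intro p hp z
    obtain ⟨_, ⟨C, rfl⟩, hpG⟩ := hp
    obtain ⟨n, hzn⟩ := hzs C z
    obtain ⟨x, hxt, hpx⟩ := mem_iUnion₂.1 ((mem_iInter.1 hpG) n)
    exact ⟨(x, zs C n), hpx, (mem_iInter₂.1 hzn) x hxt⟩
  have hLsub : ∀ j, L j ⊆ ⋃₀ Set.range G := by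
    intro j p hp
    apply hYG
    rw [hYL]
    exact mem_iUnion.2 ⟨j, hp⟩
  -- Step 6: finite subcovers for the compact pieces L j
  have step6 : ∀ (j : ℕ) (z : Z), ∃ F : Finset {q : X × Z // z ∈ B q.1 q.2},
      L j ⊆ ⋃ q ∈ F, V q.1.1 q.1.2 := by
    intro j z
    apply (hLc j).elim_finite_subcover
      (fun q : {q : X × Z // z ∈ B q.1 q.2} => V q.1.1 q.1.2)
      (fun q => hVo q.1.1 q.1.2)
    intro p hp
    obtain ⟨q, hq1, hq2⟩ := key p (hLsub j hp) z
    exact mem_iUnion.2 ⟨⟨q, hq2⟩, hq1⟩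
  choose F hF using step6
  -- Step 7: Lindelöf of Z for each j
  have step7 : ∀ j : ℕ, ∃ ws : ℕ → Z,
      ∀ z : Z, ∃ n, z ∈ ⋂ q ∈ F j (ws n), B q.1.1 q.1.2 := by
    intro j
    obtain ⟨s, hsc, hscov⟩ := hZ.isLindelof_univ.elim_countable_subcover
      (fun z => ⋂ q ∈ F j z, B q.1.1 q.1.2)
      (fun z => isOpen_biInter_finset fun q _ => hBo q.1.1 q.1.2)
      (fun z _ => mem_iUnion.2 ⟨z, mem_iInter₂.2 fun q _ => q.2⟩)
    have hsne : s.Nonempty := by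
      obtain ⟨z0⟩ := hNe
      obtain ⟨z', hz's, _⟩ := mem_iUnion₂.1 (hscov (mem_univ z0))
      exact ⟨z', hz's⟩
    obtain ⟨ws, hwseq⟩ := hsc.exists_eq_range hsne
    refine ⟨ws, fun z => ?_⟩
    obtain ⟨z', hz's, hzz'⟩ := mem_iUnion₂.1 (hscov (mem_univ z))
    rw [hwseq] at hz's
    obtain ⟨n, rfl⟩ := hz's
    exact ⟨n, hzz'⟩
  choose ws hws using step7
  -- Step 8: the countable index set
  refine ⟨⋃ (j : ℕ) (n : ℕ),
    (fun q : {q : X × Z // (ws j n) ∈ B q.1 q.2} => ind q.1.1 q.1.2) ''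
      (F j (ws j n) : Set _), ?_, ?_⟩
  · exact countable_iUnion fun j => countable_iUnion fun n =>
      ((F j (ws j n)).finite_toSet.image _).countable
  · rintro ⟨x, z⟩ -
    have hxY : stoneCechUnit x ∈ ⋃ n, L n := by
      rw [← hYL]; exact hXY ⟨x, rfl⟩
    obtain ⟨j, hj⟩ := mem_iUnion.1 hxY
    obtain ⟨n, hn⟩ := hws j z
    obtain ⟨q, hqF, hqV⟩ := mem_iUnion₂.1 (hF j (ws j n) hj)
    have hzBq : z ∈ B q.1.1 q.1.2 := (mem_iInter₂.1 hn) q hqF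
    refine mem_iUnion₂.2 ⟨ind q.1.1 q.1.2, ?_, ?_⟩
    · exact mem_iUnion.2 ⟨j, mem_iUnion.2 ⟨n, ⟨q, hqF, rfl⟩⟩⟩
    · exact hbox q.1.1 q.1.2 ⟨hqV, hzBq⟩
end

section
/- Every Alster space is productively Lindelöf. -/
open Set TopologicalSpace

open Set TopologicalSpace

theorem alster_lindelof {X : Type u} [TopologicalSpace X]
    (h : ∀ 𝒢 : Set (Set X), (∀ G ∈ 𝒢, IsGδ G) ∧ ⋃₀ 𝒢 = Set.univ ∧
      (∀ K : Set X, IsCompact K → ∃ G ∈ 𝒢, K ⊆ G) →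
      ∃ 𝒢' ⊆ 𝒢, 𝒢'.Countable ∧ ⋃₀ 𝒢' = Set.univ) :
    LindelofSpace X := by
  constructor
  apply isLindelof_of_countable_subcover
  intro ι U hUo hsU
  set 𝒢 : Set (Set X) := {S | ∃ F : Finset ι, S = ⋃ i ∈ F, U i} with h𝒢
  have hGδ : ∀ G ∈ 𝒢, IsGδ G := by
    rintro G ⟨F, rfl⟩
    exact (isOpen_biUnion fun i _ => hUo i).isGδ
  have hcov : ⋃₀ 𝒢 = Set.univ := by
    apply eq_univ_of_forall
    intro x
    obtain ⟨i, hi⟩ := mem_iUnion.mp (hsU (mem_univ x))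
    exact ⟨⋃ j ∈ ({i} : Finset ι), U j, ⟨{i}, rfl⟩, by simp [hi]⟩
  have hcpt : ∀ K : Set X, IsCompact K → ∃ G ∈ 𝒢, K ⊆ G := by
    intro K hK
    obtain ⟨F, hF⟩ := hK.elim_finite_subcover U hUo ((subset_univ K).trans hsU)
    exact ⟨⋃ i ∈ F, U i, ⟨F, rfl⟩, hF⟩
  obtain ⟨𝒢', h𝒢'sub, h𝒢'count, h𝒢'cov⟩ := h 𝒢 ⟨hGδ, hcov, hcpt⟩
  have hch : ∀ G ∈ 𝒢', ∃ F : Finset ι, G = ⋃ i ∈ F, U i := fun G hG => h𝒢'sub hG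
  choose! F hF using hch
  refine ⟨⋃ G ∈ 𝒢', ↑(F G), h𝒢'count.biUnion fun G _ => (F G).countable_toSet, ?_⟩
  intro x hx
  have : x ∈ ⋃₀ 𝒢' := h𝒢'cov ▸ mem_univ x
  obtain ⟨G, hG, hxG⟩ := this
  rw [hF G hG] at hxG
  simp only [mem_iUnion] at hxG ⊢
  obtain ⟨i, hi, hxi⟩ := hxG
  exact ⟨i, ⟨⟨G, hG, hi⟩, hxi⟩⟩


open Classical in
theorem alster_prod {X : Type u} [TopologicalSpace X]
    (h : ∀ 𝒢 : Set (Set X), (∀ G ∈ 𝒢, IsGδ G) ∧ ⋃₀ 𝒢 = Set.univ ∧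
      (∀ K : Set X, IsCompact K → ∃ G ∈ 𝒢, K ⊆ G) →
      ∃ 𝒢' ⊆ 𝒢, 𝒢'.Countable ∧ ⋃₀ 𝒢' = Set.univ)
    (Y : Type u) [TopologicalSpace Y] (hY : LindelofSpace Y) :
    LindelofSpace (X × Y) := by
  constructor
  apply isLindelof_of_countable_subcover
  intro ι W hWo hsW
  -- choose a basic box around each point inside some member of the cover
  have hbox : ∀ p : X × Y, ∃ (i : ι) (uv : Set X × Set Y),
      IsOpen uv.1 ∧ IsOpen uv.2 ∧ p.1 ∈ uv.1 ∧ p.2 ∈ uv.2 ∧ uv.1 ×ˢ uv.2 ⊆ W i := by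
    intro p
    obtain ⟨i, hi⟩ := mem_iUnion.mp (hsW (mem_univ p))
    obtain ⟨u, v, hu, hv, hpu, hpv, hsub⟩ := (isOpen_prod_iff.mp (hWo i)) p.1 p.2 hi
    exact ⟨i, (u, v), hu, hv, hpu, hpv, hsub⟩
  choose idx uv hu hv hpu hpv hsub using hbox
  set u : X × Y → Set X := fun p => (uv p).1 with hudef
  set v : X × Y → Set Y := fun p => (uv p).2 with hvdef
  -- for each K and y : Y, a finite subfamily of boxes covering K × {y} if K compact
  have hfin : ∀ (K : Set X) (y : Y),
      ∃ s : Finset X, IsCompact K → K ⊆ ⋃ x ∈ s, u (x, y) := by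
    intro K y
    by_cases hK : IsCompact K
    · obtain ⟨s, hs⟩ := hK.elim_finite_subcover (fun x => u (x, y)) (fun x => hu (x, y))
        (fun x hx => mem_iUnion.mpr ⟨x, hpu (x, y)⟩)
      exact ⟨s, fun _ => hs⟩
    · exact ⟨∅, fun h' => absurd h' hK⟩
  choose s hs using hfin
  have hyB : ∀ (K : Set X) (y : Y), y ∈ ⋂ x ∈ s K y, v (x, y) :=
    fun K y => mem_biInter fun x _ => hpv (x, y)
  -- Lindelöf Y : countable subcover by the B's
  have hYc : ∀ K : Set X, ∃ t : Set Y, t.Countable ∧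
      (univ : Set Y) ⊆ ⋃ y ∈ t, ⋂ x ∈ s K y, v (x, y) := by
    intro K
    exact hY.isLindelof_univ.elim_countable_subcover
      (fun y => ⋂ x ∈ s K y, v (x, y))
      (fun y => isOpen_biInter_finset fun x _ => hv (x, y))
      (fun y _ => mem_iUnion.mpr ⟨y, hyB K y⟩)
  choose t htc htcov using hYc
  -- the Gδ set
  set G : Set X → Set X := fun K => ⋂ y ∈ t K, ⋃ x ∈ s K y, u (x, y) with hGdef
  have hGδ : ∀ K : Set X, IsGδ (G K) :=
    fun K => IsGδ.biInter (htc K)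
      (fun y _ => (isOpen_biUnion fun x _ => hu (x, y)).isGδ)
  have hKG : ∀ K : Set X, IsCompact K → K ⊆ G K :=
    fun K hK => subset_iInter₂ fun y _ => hs K y hK
  set 𝒢 : Set (Set X) := {G' | ∃ K : Set X, IsCompact K ∧ G' = G K} with h𝒢
  have hAl : (∀ G' ∈ 𝒢, IsGδ G') ∧ ⋃₀ 𝒢 = Set.univ ∧
      (∀ K : Set X, IsCompact K → ∃ G' ∈ 𝒢, K ⊆ G') := by
    refine ⟨?_, ?_, ?_⟩
    · rintro G' ⟨K, hK, rfl⟩; exact hGδ K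
    · exact eq_univ_of_forall fun x =>
        ⟨G {x}, ⟨{x}, isCompact_singleton, rfl⟩, hKG {x} isCompact_singleton rfl⟩
    · exact fun K hK => ⟨G K, ⟨K, hK, rfl⟩, hKG K hK⟩
  obtain ⟨𝒢', h𝒢'sub, h𝒢'count, h𝒢'cov⟩ := h 𝒢 hAl
  have hch : ∀ G' ∈ 𝒢', ∃ K : Set X, IsCompact K ∧ G' = G K :=
    fun G' hG' => h𝒢'sub hG'
  choose! Kof hKc hGof using hch
  -- final countable index set
  refine ⟨⋃ G' ∈ 𝒢', ⋃ y ∈ t (Kof G'),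
      (↑(Finset.image (fun x => idx (x, y)) (s (Kof G') y)) : Set ι),
    h𝒢'count.biUnion fun G' hG' =>
      (htc (Kof G')).biUnion fun y _ => Finset.countable_toSet _, ?_⟩
  rintro ⟨x0, y0⟩ -
  have hx0 : x0 ∈ ⋃₀ 𝒢' := h𝒢'cov ▸ mem_univ x0
  obtain ⟨G', hG', hxG'⟩ := hx0
  set K := Kof G' with hKdef
  rw [hGof G' hG'] at hxG'
  obtain ⟨y, hyt, hy0⟩ := mem_iUnion₂.mp (htcov K (mem_univ y0))
  have hx0A : x0 ∈ ⋃ x ∈ s K y, u (x, y) := by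
    exact mem_iInter₂.mp hxG' y hyt
  obtain ⟨x, hxs, hx0u⟩ := mem_iUnion₂.mp hx0A
  have hy0v : y0 ∈ v (x, y) := mem_iInter₂.mp hy0 x hxs
  refine mem_iUnion₂.mpr ⟨idx (x, y), ?_, hsub (x, y) ⟨hx0u, hy0v⟩⟩
  exact mem_iUnion₂.mpr ⟨G', hG', mem_iUnion₂.mpr ⟨y, hyt,
    Finset.mem_coe.mpr (Finset.mem_image_of_mem _ hxs)⟩⟩

theorem stmt16 {X : Type u} [TopologicalSpace X] (h : AlsterSpace X) :
    LindelofSpace X ∧ ProductivelyLindelof X := by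
  exact ⟨alster_lindelof h, fun Y tY hY => alster_prod h Y hY⟩
end

section
/- Let X ⊆ I^{ω₁} be Lindelöf, K ⊆ I^{ω₁} be compact, and Λ ⊆ ω₁ be unbounded, such that p_α[K] ⊆ p_α[X] for all α ∈ Λ, where p_α is the projection to I^α. Then K ⊆ X. -/
open Set

/-! A point `k` outside a Lindelöf set `X` is separated from `X` by countably many coordinates
(the open sets `{x | x i ≠ k i}` cover `X`). In `ω₁` these coordinates lie below some `β ∈ Λ`,
and the point of `X` agreeing with `k` below `β` then contradicts the separation. -/

theorem Set.Countable.exists_forall_lt {α : Type*} [LinearOrder α]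
    (hα : Cardinal.aleph0 < Order.cof α) {s : Set α} (hs : s.Countable) :
    ∃ b, ∀ a ∈ s, a < b :=
  not_isCofinal_iff.1 fun hcof => (Order.cof_le hcof).not_gt (hs.le_aleph0.trans_lt hα)

theorem aleph0_lt_cof_omega1 : Cardinal.aleph0 < Order.cof Omega1 := by
  simp

theorem IsLindelof.exists_countable_forall_exists_ne {ι : Type*} {π : ι → Type*}
    [∀ i, TopologicalSpace (π i)] [∀ i, T1Space (π i)] {X : Set (∀ i, π i)} (hX : IsLindelof X)
    {k : ∀ i, π i} (hk : k ∉ X) : ∃ S : Set ι, S.Countable ∧ ∀ x ∈ X, ∃ i ∈ S, x i ≠ k i := by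
  have hcover : X ⊆ ⋃ i, {x | x i ≠ k i} := fun x hx =>
    mem_iUnion.2 (not_forall.1 fun hxk => hk (funext hxk ▸ hx))
  obtain ⟨S, hS, hSX⟩ := hX.elim_countable_subcover _
    (fun i => isOpen_ne.preimage (continuous_apply i)) hcover
  exact ⟨S, hS, fun x hx => by simpa using hSX hx⟩

theorem stmt17_general (X K : Set (Omega1 → unitInterval))
    (hX : IsLindelof X)
    (Λ : Set Omega1) (hunb : ∀ α : Omega1, ∃ β ∈ Λ, α < β)
    (hproj : ∀ α ∈ Λ, ∀ k ∈ K, ∃ x ∈ X, ∀ i, i < α → x i = k i) :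
    K ⊆ X := by
  intro k hk
  by_contra hkX
  obtain ⟨S, hS, hsep⟩ := hX.exists_countable_forall_exists_ne hkX
  obtain ⟨b, hb⟩ := hS.exists_forall_lt aleph0_lt_cof_omega1
  obtain ⟨β, hβ, hbβ⟩ := hunb b
  obtain ⟨x, hx, hxk⟩ := hproj β hβ k hk
  obtain ⟨i, hi, hxki⟩ := hsep x hx
  exact hxki (hxk i ((hb i hi).trans hbβ))

theorem stmt17 (X K : Set (Omega1 → unitInterval))
    (hX : IsLindelof X) (hK : IsCompact K)
    (Λ : Set Omega1) (hunb : ∀ α : Omega1, ∃ β ∈ Λ, α < β)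
    (hproj : ∀ α ∈ Λ, ∀ k ∈ K, ∃ x ∈ X, ∀ i, i < α → x i = k i) :
    K ⊆ X :=
  stmt17_general X K hX Λ hunb hproj
end
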